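/- arXiv:1907.11012 — 7 statements merged into one kernel-verified Lean document; each statement's English description precedes it below -/
import Mathlib

section
/- Suppose the unique solution (W_1,…,W_N) of the window IFS has vol(W_i) > 0 for every 1 ≤ i ≤ N (where vol denotes Lebesgue measure on ℝ^m). Then the solution is row-wise measure-disjoint: for each i, any two of the sets Q·W_j + t with 1 ≤ j ≤ N and t ∈ T_{ij} that correspond to distinct pairs (j,t) intersect in a Lebesgue null set. Moreover, there is a number η > 0 such that vol(W_i) = η·v_i holds for all 1 ≤ i ≤ N, where |v⟩ = (v_1,…,v_N) is the right Perron–Frobenius eigenvector of M normalised by Σ_i v_i = 1. -/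
open MeasureTheory Matrix Set

/-! Each piece `Q W_j + t` has volume `vol(W_j) / λ`, so subadditivity of the covering
`W_i = ⋃ (Q W_j + t)` gives `λ w ≤ M w` for the volume vector `w`. For a primitive `M`, a
positive vector with `λ w ≤ M w` is a multiple of the Perron–Frobenius eigenvector, so `w = η v`
and `M w = λ w`: the covering is additive in measure, which forces the pieces of each row to
overlap only in null sets. -/

section PerronFrobenius

variable {ι R : Type*} [Fintype ι] [DecidableEq ι]

lemma pow_mulVec_le_of_mulVec_le [CommSemiring R] [PartialOrder R] [IsOrderedRing R]
    {M : Matrix ι ι R} (hM : ∀ i j, 0 ≤ M i j) {r : R} (hr : 0 ≤ r) {u : ι → R}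
    (hu : M *ᵥ u ≤ r • u) (n : ℕ) : (M ^ n) *ᵥ u ≤ r ^ n • u := by
  induction n with
  | zero => simp
  | succ n ih =>
    calc (M ^ (n + 1)) *ᵥ u = M *ᵥ ((M ^ n) *ᵥ u) := by rw [pow_succ', mulVec_mulVec]
      _ ≤ M *ᵥ (r ^ n • u) := fun i => dotProduct_le_dotProduct_of_nonneg_left ih (hM i)
      _ = r ^ n • (M *ᵥ u) := mulVec_smul ..
      _ ≤ r ^ n • (r • u) := smul_le_smul_of_nonneg_left hu (pow_nonneg hr n)
      _ = r ^ (n + 1) • u := by rw [smul_smul, pow_succ]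

/-- With `c = max_i w_i / v_i` attained at `i₀`, the vector `u = c • v - w` is nonnegative,
vanishes at `i₀` and satisfies `M u ≤ r u`; the positive row `(M ^ k) i₀` then forces `u = 0`. -/
lemma exists_pos_eq_smul_of_smul_le_mulVec [Field R] [LinearOrder R] [IsStrictOrderedRing R]
    {M : Matrix ι ι R} (hM : ∀ i j, 0 ≤ M i j) {k : ℕ}
    (hk : ∀ i j, 0 < (M ^ k) i j) {r : R} (hr : 0 < r) {v w : ι → R} (hv : M *ᵥ v = r • v)
    (hvpos : ∀ i, 0 < v i) (hwpos : ∀ i, 0 < w i) (hw : r • w ≤ M *ᵥ w) :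
    ∃ c : R, 0 < c ∧ w = c • v := by
  cases isEmpty_or_nonempty ι
  · exact ⟨1, one_pos, Subsingleton.elim _ _⟩
  obtain ⟨i₀, hi₀⟩ := Finite.exists_max fun i => w i / v i
  set c := w i₀ / v i₀
  set u := c • v - w
  have hu_nonneg : 0 ≤ u := fun i => by
    simpa [u, mul_comm] using (div_le_iff₀ (hvpos i)).1 (hi₀ i)
  have hu_i₀ : u i₀ = 0 := by
    simp [u, c, div_mul_cancel₀ _ (hvpos i₀).ne']
  have hMu : M *ᵥ u ≤ r • u := by
    rw [mulVec_sub, mulVec_smul, hv, smul_sub, smul_comm]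
    exact sub_le_sub_left hw _
  have hrow : (M ^ k) i₀ ⬝ᵥ u = 0 :=
    le_antisymm ((pow_mulVec_le_of_mulVec_le hM hr.le hMu k i₀).trans_eq (by simp [hu_i₀]))
      (dotProduct_nonneg_of_nonneg (fun j => (hk i₀ j).le) hu_nonneg)
  have hu : u = 0 := funext fun j =>
    (mul_eq_zero.1 ((Finset.sum_eq_zero_iff_of_nonneg fun j _ =>
      mul_nonneg (hk i₀ j).le (hu_nonneg j)).1 hrow j (Finset.mem_univ j))).resolve_left
      (hk i₀ j).ne'
  exact ⟨c, div_pos (hwpos i₀) (hvpos i₀), (sub_eq_zero.1 hu).symm⟩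

end PerronFrobenius

section MeasureAdditivity

variable {α ι κ : Type*} [MeasurableSpace α] {μ : Measure α}

lemma measure_inter_eq_zero_of_measure_biUnion_eq_sum {S : Finset ι} {A : ι → Set α}
    (hA : ∀ p ∈ S, NullMeasurableSet (A p) μ) (hfin : ∀ p ∈ S, μ (A p) ≠ ⊤)
    (h : μ (⋃ p ∈ S, A p) = ∑ p ∈ S, μ (A p)) {p q : ι} (hp : p ∈ S) (hq : q ∈ S)
    (hpq : p ≠ q) : μ (A p ∩ A q) = 0 := by
  classical
  set R := (S.erase p).erase q
  have hS : S = insert p (insert q R) := by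
    rw [Finset.insert_erase (Finset.mem_erase.2 ⟨hpq.symm, hq⟩), Finset.insert_erase hp]
  have hpR : p ∉ insert q R := by simp [R, hpq]
  rw [hS, Finset.set_biUnion_insert, Finset.set_biUnion_insert, ← union_assoc,
    Finset.sum_insert hpR, Finset.sum_insert (by simp [R]), ← add_assoc] at h
  have hRfin : ∑ r ∈ R, μ (A r) ≠ ⊤ :=
    ENNReal.sum_ne_top.2 fun r hr => hfin r (Finset.mem_of_mem_erase (Finset.mem_of_mem_erase hr))
  have hsuper : μ (A p) + μ (A q) ≤ μ (A p ∪ A q) := by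
    refine (ENNReal.add_le_add_iff_right hRfin).1 ?_
    calc _ = μ (A p ∪ A q ∪ ⋃ r ∈ R, A r) := h.symm
      _ ≤ _ := (measure_union_le _ _).trans (add_le_add le_rfl (measure_biUnion_finset_le _ _))
  have hunion_fin : μ (A p ∪ A q) ≠ ⊤ := measure_union_ne_top (hfin p hp) (hfin q hq)
  refine le_antisymm ((ENNReal.add_le_add_iff_left hunion_fin).1 ?_) zero_le
  rw [add_zero, measure_union_add_inter₀ _ (hA q hq)]
  exact hsuper

lemma measure_inter_eq_zero_of_measure_iUnion_biUnion_eq_sum [Fintype ι] {T : ι → Finset κ}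
    {A : ι → κ → Set α} (hA : ∀ j, ∀ t ∈ T j, NullMeasurableSet (A j t) μ)
    (hfin : ∀ j, ∀ t ∈ T j, μ (A j t) ≠ ⊤)
    (h : μ (⋃ j, ⋃ t ∈ T j, A j t) = ∑ j, ∑ t ∈ T j, μ (A j t))
    {j j' : ι} {t t' : κ} (ht : t ∈ T j) (ht' : t' ∈ T j') (hne : (j, t) ≠ (j', t')) :
    μ (A j t ∩ A j' t') = 0 := by
  refine measure_inter_eq_zero_of_measure_biUnion_eq_sum (S := Finset.univ.sigma T)
    (A := fun p => A p.1 p.2) (fun p hp => hA _ _ (Finset.mem_sigma.1 hp).2)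
    (fun p hp => hfin _ _ (Finset.mem_sigma.1 hp).2) ?_ (p := ⟨j, t⟩) (q := ⟨j', t'⟩)
    (by simpa using ht) (by simpa using ht') (by simpa [Prod.ext_iff] using hne)
  rw [Finset.sum_sigma]
  convert h using 2
  ext
  simp

lemma measure_iUnion_biUnion_le [Fintype ι] (T : ι → Finset κ) (A : ι → κ → Set α) :
    μ (⋃ j, ⋃ t ∈ T j, A j t) ≤ ∑ j, ∑ t ∈ T j, μ (A j t) :=
  (measure_iUnion_fintype_le _ _).trans (Finset.sum_le_sum fun _ _ => measure_biUnion_finset_le _ _)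

end MeasureAdditivity

section AffinePieces

variable {E : Type*} [NormedAddCommGroup E] [NormedSpace ℝ E] [MeasurableSpace E] [BorelSpace E]
  [FiniteDimensional ℝ E] (μ : Measure E) [μ.IsAddHaarMeasure] (f : E →L[ℝ] E)

lemma addHaar_image_continuousLinearMap_add (t : E) (s : Set E) :
    μ ((fun x => f x + t) '' s) = ENNReal.ofReal |f.det| * μ s := by
  rw [← image_image (· + t) f, image_add_right, measure_preimage_add_right,
    Measure.addHaar_image_continuousLinearMap]

lemma sum_addHaar_image_continuousLinearMap_add {ι : Type*} [Fintype ι] (T : ι → Finset E)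
    (W : ι → Set E) {w : ι → ℝ} (hw : ∀ j, 0 ≤ w j)
    (hWw : ∀ j, μ (W j) = ENNReal.ofReal (w j)) :
    ∑ j, ∑ t ∈ T j, μ ((fun x => f x + t) '' W j) =
      ENNReal.ofReal (|f.det| * ∑ j, (T j).card * w j) := by
  rw [Finset.mul_sum, ENNReal.ofReal_sum_of_nonneg fun j _ => by have := hw j; positivity]
  refine Finset.sum_congr rfl fun j _ => ?_
  rw [Finset.sum_congr rfl fun t _ => addHaar_image_continuousLinearMap_add μ f t (W j),
    Finset.sum_const, nsmul_eq_mul, hWw, ← ENNReal.ofReal_natCast,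
    ← ENNReal.ofReal_mul (abs_nonneg _), ← ENNReal.ofReal_mul (Nat.cast_nonneg _)]
  ring_nf

end AffinePieces

theorem stmt1_general
    {N m : ℕ}
    (T : Fin N → Fin N → Finset (EuclideanSpace ℝ (Fin m)))
    (M : Matrix (Fin N) (Fin N) ℝ)
    (hM : ∀ i j, M i j = (T i j).card)
    (hprim : ∃ k : ℕ, ∀ i j, 0 < (M ^ k) i j)
    (lam : ℝ) (hlam : 1 < lam)
    (v : Fin N → ℝ)
    (hv : M.mulVec v = lam • v) (hvpos : ∀ i, 0 < v i)
    (Q : EuclideanSpace ℝ (Fin m) →L[ℝ] EuclideanSpace ℝ (Fin m))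
    (hQdet : |Q.det| = 1 / lam)
    (W : Fin N → Set (EuclideanSpace ℝ (Fin m)))
    (hWcp : ∀ i, IsCompact (W i))
    (hIFS : ∀ i, W i = ⋃ j, ⋃ t ∈ T i j, (fun x => Q x + t) '' W j)
    (hvol : ∀ i, 0 < volume (W i)) :
    (∀ i j j' : Fin N, ∀ t ∈ T i j, ∀ t' ∈ T i j', (j, t) ≠ (j', t') →
      volume (((fun x => Q x + t) '' W j) ∩ ((fun x => Q x + t') '' W j')) = 0) ∧
    (∃ η : ℝ, 0 < η ∧ ∀ i, volume (W i) = ENNReal.ofReal (η * v i)) := by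
  obtain ⟨k, hk⟩ := hprim
  have hlam0 : 0 < lam := zero_lt_one.trans hlam
  have hM0 : ∀ i j, 0 ≤ M i j := fun i j => hM i j ▸ Nat.cast_nonneg _
  have hpiece_cpt : ∀ j t, IsCompact ((fun x => Q x + t) '' W j) :=
    fun j t => (hWcp j).image (by fun_prop)
  choose w hwpos hWw using fun i => show ∃ x : ℝ, 0 < x ∧ volume (W i) = ENNReal.ofReal x from
    ⟨_, ENNReal.toReal_pos (hvol i).ne' (hWcp i).measure_lt_top.ne,
      (ENNReal.ofReal_toReal (hWcp i).measure_lt_top.ne).symm⟩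
  have hrow : ∀ i, ∑ j, ∑ t ∈ T i j, volume ((fun x => Q x + t) '' W j) =
      ENNReal.ofReal ((M *ᵥ w) i / lam) := fun i => by
    rw [sum_addHaar_image_continuousLinearMap_add volume Q (T i) W (fun j => (hwpos j).le) hWw,
      hQdet, one_div_mul_eq_div]
    simp [mulVec, dotProduct, hM]
  have hsub : lam • w ≤ M *ᵥ w := fun i => by
    have hcover := (hIFS i).symm ▸ measure_iUnion_biUnion_le (μ := volume) (T i) _
    have hMw_nonneg : 0 ≤ (M *ᵥ w) i :=
      dotProduct_nonneg_of_nonneg (hM0 i) fun j => (hwpos j).le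
    rw [hrow, hWw, ENNReal.ofReal_le_ofReal_iff (div_nonneg hMw_nonneg hlam0.le),
      le_div_iff₀ hlam0, mul_comm] at hcover
    exact hcover
  obtain ⟨η, hη, hwv⟩ := exists_pos_eq_smul_of_smul_le_mulVec hM0 hk hlam0 hv hvpos hwpos hsub
  have hMw : M *ᵥ w = lam • w := by rw [hwv, mulVec_smul, hv, smul_comm]
  have hadditive : ∀ i, volume (⋃ j, ⋃ t ∈ T i j, (fun x => Q x + t) '' W j) =
      ∑ j, ∑ t ∈ T i j, volume ((fun x => Q x + t) '' W j) := by
    intro i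
    rw [← hIFS i, hrow, hMw, Pi.smul_apply, smul_eq_mul, mul_div_cancel_left₀ _ hlam0.ne', hWw]
  refine ⟨fun i j j' t ht t' ht' hne => ?_, η, hη, fun i => by rw [hWw, hwv]; rfl⟩
  exact measure_inter_eq_zero_of_measure_iUnion_biUnion_eq_sum
    (fun j t _ => (hpiece_cpt j t).measurableSet.nullMeasurableSet)
    (fun j t _ => (hpiece_cpt j t).measure_lt_top.ne) (hadditive i) ht ht' hne

/-- if the unique solution of the window IFS has windows of positive
Lebesgue measure, then the solution is row-wise measure-disjoint, and there is
`η > 0` with `vol(W_i) = η·v_i` for all `i`, where `v` is the normalised right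
Perron–Frobenius eigenvector of `M`. -/
theorem stmt1
    {N m : ℕ} (hN : 1 ≤ N) (hm : 1 ≤ m)
    (T : Fin N → Fin N → Finset (EuclideanSpace ℝ (Fin m)))
    (M : Matrix (Fin N) (Fin N) ℝ)
    (hM : ∀ i j, M i j = (T i j).card)
    (hprim : ∃ k : ℕ, ∀ i j, 0 < (M ^ k) i j)
    (lam : ℝ) (hlam : 1 < lam)
    (v : Fin N → ℝ)
    (hv : M.mulVec v = lam • v) (hvpos : ∀ i, 0 < v i) (hvsum : ∑ i, v i = 1)
    (Q : EuclideanSpace ℝ (Fin m) →L[ℝ] EuclideanSpace ℝ (Fin m))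
    (hQbij : Function.Bijective Q)
    (hQcontr : ‖Q‖ < 1)
    (hQdet : |Q.det| = 1 / lam)
    (W : Fin N → Set (EuclideanSpace ℝ (Fin m)))
    (hWne : ∀ i, (W i).Nonempty) (hWcp : ∀ i, IsCompact (W i))
    (hIFS : ∀ i, W i = ⋃ j, ⋃ t ∈ T i j, (fun x => Q x + t) '' W j)
    (hvol : ∀ i, 0 < volume (W i)) :
    (∀ i j j' : Fin N, ∀ t ∈ T i j, ∀ t' ∈ T i j', (j, t) ≠ (j', t') →
      volume (((fun x => Q x + t) '' W j) ∩ ((fun x => Q x + t') '' W j')) = 0) ∧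
    (∃ η : ℝ, 0 < η ∧ ∀ i, volume (W i) = ENNReal.ofReal (η * v i)) :=
  stmt1_general T M hM hprim lam hlam v hv hvpos Q hQdet W hWcp hIFS hvol
end

section
/- Suppose the unique solution (W_1,…,W_N) of the window IFS is row-wise measure-disjoint (for each i, any two of the sets Q·W_j + t with t ∈ T_{ij} corresponding to distinct pairs (j,t) intersect in a Lebesgue null set). Define f_i(y) = ∫_{W_i} exp(2πi⟨x,y⟩) dx for y ∈ ℝ^m. Then each f_i is continuous, and with R = Qᵀ one has the transfer-matrix relation f_i(y) = λ^{−1} Σ_{j=1}^{N} B_{ij}(y) · f_j(R y) for all y ∈ ℝ^m and all 1 ≤ i ≤ N. -/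
open MeasureTheory Function

/-!
Cut `W_i` into the pieces `Q W_j + t`, which overlap only in null sets, so `f_i(y)` is the sum
of the integrals over the pieces. On each piece the affine substitution `x = Q u + t` contributes
the Jacobian `|det Q| = λ⁻¹`, and since `⟨Q u + t, y⟩ = ⟨t, y⟩ + ⟨u, Qᵀ y⟩` the integrand splits
into the phase `e^{2πi⟨t,y⟩}`, summed by `B_{ij}(y)`, times the integrand of `f_j(Qᵀ y)`.
Continuity is that of a parametric integral of a jointly continuous function over a compact set.
-/

theorem integral_iUnion_biUnion_finset_ae {X F ι κ : Type*} [MeasurableSpace X]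
    [NormedAddCommGroup F] [NormedSpace ℝ F] {μ : Measure X} [Fintype ι]
    (T : ι → Finset κ) {S : ι → κ → Set X} (hS : ∀ j t, NullMeasurableSet (S j t) μ)
    (hd : ∀ j j', ∀ t ∈ T j, ∀ t' ∈ T j', (j, t) ≠ (j', t') → μ (S j t ∩ S j' t') = 0)
    {g : X → F} (hg : IntegrableOn g (⋃ j, ⋃ t ∈ T j, S j t) μ) :
    ∫ x in ⋃ j, ⋃ t ∈ T j, S j t, g x ∂μ = ∑ j, ∑ t ∈ T j, ∫ x in S j t, g x ∂μ := by
  classical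
  let S' : (Σ j, T j) → Set X := fun p => S p.1 p.2
  have hunion : ⋃ j, ⋃ t ∈ T j, S j t = ⋃ p, S' p := by
    ext x
    simp [S', Sigma.exists]
  have hdisj : Pairwise (AEDisjoint μ on S') := by
    rintro ⟨j, t, ht⟩ ⟨j', t', ht'⟩ hne
    refine hd j j' t ht t' ht' fun h => hne ?_
    obtain ⟨rfl, rfl⟩ := Prod.mk.inj h
    rfl
  rw [hunion, integral_iUnion_ae (fun p => hS _ _) hdisj (hunion ▸ hg), tsum_fintype,
    ← Finset.univ_sigma_univ, Finset.sum_sigma]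
  exact Finset.sum_congr rfl fun j _ => Finset.sum_coe_sort (T j) fun t => ∫ x in S j t, g x ∂μ

theorem cexp_inner_affine {E : Type*} [NormedAddCommGroup E] [InnerProductSpace ℝ E]
    [CompleteSpace E] (Q : E →L[ℝ] E) (t u y : E) :
    Complex.exp (2 * Real.pi * Complex.I * ((inner ℝ (Q u + t) y : ℝ) : ℂ)) =
      Complex.exp (2 * Real.pi * Complex.I * ((inner ℝ t y : ℝ) : ℂ)) *
        Complex.exp (2 * Real.pi * Complex.I *
          ((inner ℝ u (ContinuousLinearMap.adjoint Q y) : ℝ) : ℂ)) := by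
  rw [← Complex.exp_add, ContinuousLinearMap.adjoint_inner_right, inner_add_left]
  push_cast
  ring_nf

section

variable {E : Type*} [NormedAddCommGroup E] [InnerProductSpace ℝ E] [FiniteDimensional ℝ E]
  [MeasurableSpace E] [BorelSpace E] (μ : Measure E) [μ.IsAddHaarMeasure]

theorem setIntegral_image_affine {F : Type*} [NormedAddCommGroup F] [NormedSpace ℝ F]
    {Q : E →L[ℝ] E} (hQ : Injective Q) (t : E) {s : Set E} (hs : MeasurableSet s)
    (g : E → F) :
    ∫ x in (fun x => Q x + t) '' s, g x ∂μ = |Q.det| • ∫ u in s, g (Q u + t) ∂μ := by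
  rw [integral_image_eq_integral_abs_det_fderiv_smul μ hs
    (fun x _ => (Q.hasFDerivAt.add_const t).hasFDerivWithinAt)
    (fun a _ b _ hab => hQ (add_right_cancel hab)), integral_smul]

theorem setIntegral_cexp_inner_image_affine {Q : E →L[ℝ] E} (hQ : Injective Q)
    (t y : E) {s : Set E} (hs : MeasurableSet s) :
    ∫ x in (fun x => Q x + t) '' s,
        Complex.exp (2 * Real.pi * Complex.I * ((inner ℝ x y : ℝ) : ℂ)) ∂μ =
      |Q.det| * Complex.exp (2 * Real.pi * Complex.I * ((inner ℝ t y : ℝ) : ℂ)) *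
        ∫ u in s, Complex.exp (2 * Real.pi * Complex.I *
          ((inner ℝ u (ContinuousLinearMap.adjoint Q y) : ℝ) : ℂ)) ∂μ := by
  simp_rw [setIntegral_image_affine μ hQ t hs, cexp_inner_affine]
  rw [integral_const_mul, Complex.real_smul, ← mul_assoc]

end

theorem stmt5_general
    {N m : ℕ}
    (T : Fin N → Fin N → Finset (EuclideanSpace ℝ (Fin m)))
    (lam : ℝ)
    (B : EuclideanSpace ℝ (Fin m) → Matrix (Fin N) (Fin N) ℂ)
    (hB : ∀ y i j, B y i j =
      ∑ x ∈ T i j, Complex.exp (2 * Real.pi * Complex.I * ((inner ℝ x y : ℝ) : ℂ)))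
    (Q : EuclideanSpace ℝ (Fin m) →L[ℝ] EuclideanSpace ℝ (Fin m))
    (hQbij : Function.Bijective Q)
    (hQdet : |Q.det| = 1 / lam)
    (W : Fin N → Set (EuclideanSpace ℝ (Fin m)))
    (hWcp : ∀ i, IsCompact (W i))
    (hIFS : ∀ i, W i = ⋃ j, ⋃ t ∈ T i j, (fun x => Q x + t) '' W j)
    (hdisj : ∀ i j j' : Fin N, ∀ t ∈ T i j, ∀ t' ∈ T i j', (j, t) ≠ (j', t') →
      volume (((fun x => Q x + t) '' W j) ∩ ((fun x => Q x + t') '' W j')) = 0)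
    (f : Fin N → EuclideanSpace ℝ (Fin m) → ℂ)
    (hf : ∀ i y, f i y =
      ∫ x in W i, Complex.exp (2 * Real.pi * Complex.I * ((inner ℝ x y : ℝ) : ℂ))) :
    (∀ i, Continuous (f i)) ∧
    (∀ (y : EuclideanSpace ℝ (Fin m)) (i : Fin N),
      f i y = ((lam : ℂ))⁻¹ *
        ∑ j, B y i j * f j (ContinuousLinearMap.adjoint Q y)) := by
  have hcont : Continuous fun p : EuclideanSpace ℝ (Fin m) × EuclideanSpace ℝ (Fin m) =>
      Complex.exp (2 * Real.pi * Complex.I * ((inner ℝ p.2 p.1 : ℝ) : ℂ)) := by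
    fun_prop
  refine ⟨fun i => ?_, fun y i => ?_⟩
  · rw [funext (hf i)]
    exact continuous_parametric_integral_of_continuous hcont (hWcp i)
  have hpieces : ∀ j t, MeasurableSet ((fun x => Q x + t) '' W j) := fun j t =>
    ((hWcp j).image (by fun_prop)).measurableSet
  have hint : IntegrableOn
      (fun x => Complex.exp (2 * Real.pi * Complex.I * ((inner ℝ x y : ℝ) : ℂ))) (W i) :=
    (hcont.comp (Continuous.prodMk_right y)).continuousOn.integrableOn_compact (hWcp i)
  rw [hIFS i] at hint
  rw [hf, hIFS i, integral_iUnion_biUnion_finset_ae (T i) (fun j t => (hpieces j t).nullMeasurableSet)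
    (hdisj i) hint, Finset.mul_sum]
  refine Finset.sum_congr rfl fun j _ => ?_
  rw [hB, Finset.sum_mul, Finset.mul_sum]
  refine Finset.sum_congr rfl fun t _ => ?_
  rw [setIntegral_cexp_inner_image_affine volume hQbij.1 t y (hWcp j).measurableSet, hQdet, hf]
  push_cast
  ring

/-- with `f_i(y) = ∫_{W_i} e^{2πi⟨x,y⟩} dx`, each `f_i` is continuous
and, with `R = Qᵀ`, one has `f_i(y) = λ⁻¹ Σ_j B_{ij}(y) f_j(Ry)`. -/
theorem stmt5
    {N m : ℕ} (hN : 1 ≤ N) (hm : 1 ≤ m)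
    (T : Fin N → Fin N → Finset (EuclideanSpace ℝ (Fin m)))
    (M : Matrix (Fin N) (Fin N) ℝ)
    (hM : ∀ i j, M i j = (T i j).card)
    (hprim : ∃ k : ℕ, ∀ i j, 0 < (M ^ k) i j)
    (lam : ℝ) (hlam : 1 < lam)
    (B : EuclideanSpace ℝ (Fin m) → Matrix (Fin N) (Fin N) ℂ)
    (hB : ∀ y i j, B y i j =
      ∑ x ∈ T i j, Complex.exp (2 * Real.pi * Complex.I * ((inner ℝ x y : ℝ) : ℂ)))
    (Q : EuclideanSpace ℝ (Fin m) →L[ℝ] EuclideanSpace ℝ (Fin m))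
    (hQbij : Function.Bijective Q)
    (hQcontr : ‖Q‖ < 1)
    (hQdet : |Q.det| = 1 / lam)
    (W : Fin N → Set (EuclideanSpace ℝ (Fin m)))
    (hWne : ∀ i, (W i).Nonempty) (hWcp : ∀ i, IsCompact (W i))
    (hIFS : ∀ i, W i = ⋃ j, ⋃ t ∈ T i j, (fun x => Q x + t) '' W j)
    (hdisj : ∀ i j j' : Fin N, ∀ t ∈ T i j, ∀ t' ∈ T i j', (j, t) ≠ (j', t') →
      volume (((fun x => Q x + t) '' W j) ∩ ((fun x => Q x + t') '' W j')) = 0)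
    (f : Fin N → EuclideanSpace ℝ (Fin m) → ℂ)
    (hf : ∀ i y, f i y =
      ∫ x in W i, Complex.exp (2 * Real.pi * Complex.I * ((inner ℝ x y : ℝ) : ℂ))) :
    (∀ i, Continuous (f i)) ∧
    (∀ (y : EuclideanSpace ℝ (Fin m)) (i : Fin N),
      f i y = ((lam : ℂ))⁻¹ *
        ∑ j, B y i j * f j (ContinuousLinearMap.adjoint Q y)) :=
  stmt5_general T lam B hB Q hQbij hQdet W hWcp hIFS hdisj f hf
end

section
/- The sequence of matrix functions (λ^{−n}(B^{(n)}(y) − M^n))_{n∈ℕ} is equicontinuous at y = 0: for every ε > 0 there exists δ = δ(ε) > 0 such that for all n ∈ ℕ and all y ∈ ℝ^m with ‖y‖₂ < δ one has λ^{−n}·‖B^{(n)}(y) − M^n‖₂ < ε. -/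
/-!
Telescoping along the cocycle gives
`B⁽ⁿ⁾(y) - Mⁿ = ∑_{k<n} Mᵏ (B(Rᵏy) - M) B⁽ⁿ⁻¹⁻ᵏ⁾(Rᵏ⁺¹y)`.
Entrywise `|B⁽ʲ⁾(y)| ≤ Mʲ`, and a positive right eigenvector `v` of `M` gives
`(Mʲ)ᵢₗ ≤ λʲ vᵢ / vₗ`, so both outer factors are `O(λʲ)` uniformly in `y`. The middle factor is
`O(‖Rᵏy‖) = O(θᵏ ‖y‖)` because `B` is Lipschitz with `B(0) = M`. Summing the geometric series in
`θ` yields `‖B⁽ⁿ⁾(y) - Mⁿ‖ ≤ K ‖y‖ λⁿ` with `K` independent of `n`.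
-/

open Finset

open scoped Matrix.Norms.L2Operator

section Cocycle

variable {A X : Type*}

theorem cocycle_sub_pow_eq_sum [Ring A] {B : X → A} {a : A} {f : X → X} {Bc : ℕ → X → A}
    (h0 : ∀ y, Bc 0 y = 1) (hS : ∀ n y, Bc (n + 1) y = B y * Bc n (f y)) (n : ℕ) (y : X) :
    Bc n y - a ^ n =
      ∑ k ∈ range n, a ^ k * (B (f^[k] y) - a) * Bc (n - 1 - k) (f^[k + 1] y) := by
  induction n generalizing y with
  | zero => simp [h0]
  | succ n ih =>
    have hsplit : Bc (n + 1) y - a ^ (n + 1) =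
        a * (Bc n (f y) - a ^ n) + (B y - a) * Bc n (f y) := by
      rw [hS, pow_succ']; noncomm_ring
    rw [hsplit, ih, mul_sum, sum_range_succ']
    simp only [pow_succ', Function.iterate_succ_apply, mul_assoc]
    congr 1
    · exact sum_congr rfl fun k hk => by rw [show n + 1 - 1 - (k + 1) = n - 1 - k by omega]
    · simp

theorem norm_iterate_le [SeminormedAddCommGroup X] {f : X → X} {θ : ℝ} (hθ : 0 ≤ θ)
    (hf : ∀ y, ‖f y‖ ≤ θ * ‖y‖) (k : ℕ) (y : X) : ‖f^[k] y‖ ≤ θ ^ k * ‖y‖ := by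
  induction k with
  | zero => simp
  | succ k ih =>
    rw [Function.iterate_succ_apply', pow_succ', mul_assoc]
    exact (hf _).trans (mul_le_mul_of_nonneg_left ih hθ)

theorem norm_cocycle_sub_pow_le [NormedRing A] [SeminormedAddCommGroup X] {B : X → A} {a : A}
    {f : X → X} {Bc : ℕ → X → A} {C L θ lam : ℝ}
    (h0 : ∀ y, Bc 0 y = 1) (hS : ∀ n y, Bc (n + 1) y = B y * Bc n (f y))
    (hpow : ∀ k, ‖a ^ k‖ ≤ C * lam ^ k) (hBc : ∀ k y, ‖Bc k y‖ ≤ C * lam ^ k)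
    (hB : ∀ y, ‖B y - a‖ ≤ L * ‖y‖) (hL : 0 ≤ L)
    (hθ : 0 ≤ θ) (hθ1 : θ < 1) (hf : ∀ y, ‖f y‖ ≤ θ * ‖y‖) (hlam : 1 ≤ lam) (n : ℕ) (y : X) :
    ‖Bc n y - a ^ n‖ ≤ C * L * C / (1 - θ) * ‖y‖ * lam ^ n := by
  have hC : 0 ≤ C := by simpa using (norm_nonneg _).trans (hpow 0)
  have hterm : ∀ k ∈ range n, ‖a ^ k * (B (f^[k] y) - a) * Bc (n - 1 - k) (f^[k + 1] y)‖ ≤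
      C * L * C * ‖y‖ * lam ^ (n - 1) * θ ^ k := fun k hk => by
    have hk : k + (n - 1 - k) = n - 1 := by have := mem_range.mp hk; omega
    calc _ ≤ ‖a ^ k‖ * ‖B (f^[k] y) - a‖ * ‖Bc (n - 1 - k) (f^[k + 1] y)‖ := norm_mul₃_le
      _ ≤ (C * lam ^ k) * (L * (θ ^ k * ‖y‖)) * (C * lam ^ (n - 1 - k)) := by
        gcongr
        · exact hpow k
        · exact (hB _).trans (mul_le_mul_of_nonneg_left (norm_iterate_le hθ hf k y) hL)
        · exact hBc _ _
      _ = C * L * C * ‖y‖ * (lam ^ k * lam ^ (n - 1 - k)) * θ ^ k := by ring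
      _ = C * L * C * ‖y‖ * lam ^ (n - 1) * θ ^ k := by rw [← pow_add, hk]
  have hgeom : ∑ k ∈ range n, θ ^ k ≤ 1 / (1 - θ) := by
    rw [range_eq_Ico]
    simpa using geom_sum_Ico_le_of_lt_one (m := 0) (n := n) hθ hθ1
  calc ‖Bc n y - a ^ n‖ ≤ ∑ k ∈ range n, C * L * C * ‖y‖ * lam ^ (n - 1) * θ ^ k := by
        rw [cocycle_sub_pow_eq_sum h0 hS]
        exact (norm_sum_le _ _).trans (sum_le_sum hterm)
    _ ≤ C * L * C * ‖y‖ * lam ^ n * (1 / (1 - θ)) := by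
        rw [← mul_sum]
        gcongr
        exact n.sub_le 1
    _ = C * L * C / (1 - θ) * ‖y‖ * lam ^ n := by ring

theorem exists_forall_norm_lt_inv_pow_mul_lt [SeminormedAddCommGroup X] {g : ℕ → X → ℝ}
    {K lam : ℝ} (hlam : 0 < lam) (hg : ∀ n y, g n y ≤ K * ‖y‖ * lam ^ n) {ε : ℝ} (hε : 0 < ε) :
    ∃ δ : ℝ, 0 < δ ∧ ∀ n y, ‖y‖ < δ → (lam ^ n)⁻¹ * g n y < ε := by
  refine ⟨ε / (|K| + 1), by positivity, fun n y hy => ?_⟩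
  calc (lam ^ n)⁻¹ * g n y ≤ K * ‖y‖ := by
        rw [inv_mul_le_iff₀ (pow_pos hlam n), mul_comm]; exact hg n y
    _ ≤ |K| * (ε / (|K| + 1)) := by gcongr; exact le_abs_self K
    _ < ε := by
        rw [mul_div_assoc', div_lt_iff₀ (by positivity)]
        linarith

end Cocycle

namespace Matrix

variable {ι : Type*} [Fintype ι]

theorem norm_mul_apply_le_of_norm_apply_le {α l n : Type*} [SeminormedRing α]
    {A : Matrix l ι α} {B : Matrix ι n α} {P : Matrix l ι ℝ} {Q : Matrix ι n ℝ}
    (hA : ∀ i j, ‖A i j‖ ≤ P i j) (hB : ∀ i j, ‖B i j‖ ≤ Q i j) (i : l) (k : n) :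
    ‖(A * B) i k‖ ≤ (P * Q) i k := by
  rw [mul_apply, mul_apply]
  refine (norm_sum_le _ _).trans (sum_le_sum fun j _ => (norm_mul_le _ _).trans ?_)
  exact mul_le_mul (hA i j) (hB j k) (norm_nonneg _) ((norm_nonneg _).trans (hA i j))

variable [DecidableEq ι]

theorem norm_cocycle_apply_le_pow_apply {α X : Type*} [SeminormedRing α] [NormOneClass α]
    {B : X → Matrix ι ι α} {M : Matrix ι ι ℝ} {f : X → X} {Bc : ℕ → X → Matrix ι ι α}
    (hB : ∀ y i j, ‖B y i j‖ ≤ M i j)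
    (h0 : ∀ y, Bc 0 y = 1) (hS : ∀ n y, Bc (n + 1) y = B y * Bc n (f y)) (n : ℕ) (y : X) :
    ∀ i j, ‖Bc n y i j‖ ≤ (M ^ n) i j := by
  induction n generalizing y with
  | zero => intro i j; by_cases h : i = j <;> simp [h0, h]
  | succ n ih =>
    rw [hS, pow_succ']
    exact norm_mul_apply_le_of_norm_apply_le (hB y) (ih (f y))

theorem pow_apply_le_of_mulVec_eq_smul {M : Matrix ι ι ℝ} (hM : ∀ i j, 0 ≤ M i j)
    {v : ι → ℝ} {lam : ℝ} (hv : M *ᵥ v = lam • v) (hvpos : ∀ i, 0 < v i) (k : ℕ) (i j : ι) :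
    (M ^ k) i j ≤ lam ^ k * (v i / v j) := by
  have hvk : (M ^ k) *ᵥ v = lam ^ k • v := by
    induction k with
    | zero => simp
    | succ k ih => rw [pow_succ', ← mulVec_mulVec, ih, mulVec_smul, hv, smul_smul, pow_succ]
  rw [← mul_div_assoc, le_div_iff₀ (hvpos j)]
  calc (M ^ k) i j * v j ≤ ∑ l, (M ^ k) i l * v l :=
        single_le_sum (fun l _ => mul_nonneg (pow_apply_nonneg hM k i l) (hvpos l).le) (mem_univ j)
    _ = lam ^ k * v i := by simpa [mulVec, dotProduct] using congrFun hvk i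

variable {𝕜 : Type*} [RCLike 𝕜]

theorem l2_opNorm_single_le (i j : ι) (c : 𝕜) : ‖(single i j c : Matrix ι ι 𝕜)‖ ≤ ‖c‖ := by
  rw [cstar_norm_def]
  refine ContinuousLinearMap.opNorm_le_bound _ (norm_nonneg c) fun x => ?_
  have : toEuclideanCLM (𝕜 := 𝕜) (single i j c) x = PiLp.single 2 i (c * x j) := by
    ext k
    simp [single_mulVec, Function.update_apply]
  rw [this, PiLp.norm_single, norm_mul]
  exact mul_le_mul_of_nonneg_left (PiLp.norm_apply_le x j) (norm_nonneg c)

theorem l2_opNorm_le_sum_norm_apply (A : Matrix ι ι 𝕜) : ‖A‖ ≤ ∑ i, ∑ j, ‖A i j‖ := by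
  conv_lhs => rw [matrix_eq_sum_single A]
  exact (norm_sum_le _ _).trans <| sum_le_sum fun i _ =>
    (norm_sum_le _ _).trans <| sum_le_sum fun j _ => l2_opNorm_single_le i j _

theorem l2_opNorm_le_of_norm_apply_le_pow_apply {M : Matrix ι ι ℝ} (hM : ∀ i j, 0 ≤ M i j)
    {v : ι → ℝ} {lam : ℝ} (hv : M *ᵥ v = lam • v) (hvpos : ∀ i, 0 < v i) {k : ℕ}
    {A : Matrix ι ι 𝕜} (hA : ∀ i j, ‖A i j‖ ≤ (M ^ k) i j) :
    ‖A‖ ≤ (∑ i, ∑ j, v i / v j) * lam ^ k := by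
  rw [sum_mul]
  refine (l2_opNorm_le_sum_norm_apply A).trans (sum_le_sum fun i _ => ?_)
  rw [sum_mul]
  refine sum_le_sum fun j _ => (hA i j).trans ?_
  rw [mul_comm]
  exact pow_apply_le_of_mulVec_eq_smul hM hv hvpos k i j

end Matrix

section Fourier

variable {E : Type*} [NormedAddCommGroup E] [InnerProductSpace ℝ E]

theorem exp_two_pi_I_inner_eq (x y : E) :
    Complex.exp (2 * Real.pi * Complex.I * ((inner ℝ x y : ℝ) : ℂ)) =
      Complex.exp (Complex.I * ((2 * Real.pi * inner ℝ x y : ℝ) : ℂ)) := by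
  push_cast; ring_nf

theorem norm_sum_exp_inner_sub_card_le (S : Finset E) (y : E) :
    ‖∑ x ∈ S, Complex.exp (2 * Real.pi * Complex.I * ((inner ℝ x y : ℝ) : ℂ)) - S.card‖ ≤
      (∑ x ∈ S, 2 * Real.pi * ‖x‖) * ‖y‖ := by
  rw [Finset.card_eq_sum_ones, Nat.cast_sum, ← sum_sub_distrib, sum_mul]
  refine (norm_sum_le _ _).trans (sum_le_sum fun x _ => ?_)
  rw [exp_two_pi_I_inner_eq, Nat.cast_one]
  refine Real.norm_exp_I_mul_ofReal_sub_one_le.trans ?_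
  rw [Real.norm_eq_abs, abs_mul (2 * Real.pi), abs_of_pos Real.two_pi_pos, mul_assoc _ ‖x‖]
  exact mul_le_mul_of_nonneg_left (abs_real_inner_le_norm x y) Real.two_pi_pos.le

variable {ι : Type*}

noncomputable def fourierMatrix (T : ι → ι → Finset E) (y : E) : Matrix ι ι ℂ :=
  Matrix.of fun i j =>
    ∑ x ∈ T i j, Complex.exp (2 * Real.pi * Complex.I * ((inner ℝ x y : ℝ) : ℂ))

def cardMatrix (T : ι → ι → Finset E) : Matrix ι ι ℝ :=
  Matrix.of fun i j => (T i j).card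

theorem norm_fourierMatrix_apply_le (T : ι → ι → Finset E) (y : E) (i j : ι) :
    ‖fourierMatrix T y i j‖ ≤ cardMatrix T i j := by
  refine (norm_sum_le _ _).trans_eq ?_
  simp only [exp_two_pi_I_inner_eq, Complex.norm_exp_I_mul_ofReal, sum_const, nsmul_eq_mul,
    mul_one, cardMatrix, Matrix.of_apply]

theorem l2_opNorm_fourierMatrix_sub_le [Fintype ι] [DecidableEq ι] (T : ι → ι → Finset E)
    (y : E) :
    ‖fourierMatrix T y - (cardMatrix T).map Complex.ofReal‖ ≤
      (∑ i, ∑ j, ∑ x ∈ T i j, 2 * Real.pi * ‖x‖) * ‖y‖ := by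
  refine (Matrix.l2_opNorm_le_sum_norm_apply _).trans ?_
  rw [sum_mul]
  refine sum_le_sum fun i _ => ?_
  rw [sum_mul]
  refine sum_le_sum fun j _ => ?_
  simpa [fourierMatrix, cardMatrix] using norm_sum_exp_inner_sub_card_le (T i j) y

end Fourier

theorem stmt7_general
    {N m : ℕ}
    (T : Fin N → Fin N → Finset (EuclideanSpace ℝ (Fin m)))
    (M : Matrix (Fin N) (Fin N) ℝ)
    (hM : ∀ i j, M i j = (T i j).card)
    (lam : ℝ) (hlam : 1 < lam)
    (v : Fin N → ℝ)
    (hv : M.mulVec v = lam • v)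
    (hvpos : ∀ i, 0 < v i)
    (B : EuclideanSpace ℝ (Fin m) → Matrix (Fin N) (Fin N) ℂ)
    (hB : ∀ y i j, B y i j =
      ∑ x ∈ T i j, Complex.exp (2 * Real.pi * Complex.I * ((inner ℝ x y : ℝ) : ℂ)))
    (R : EuclideanSpace ℝ (Fin m) →L[ℝ] EuclideanSpace ℝ (Fin m))
    (hRcontr : ‖R‖ < 1)
    (Bc : ℕ → EuclideanSpace ℝ (Fin m) → Matrix (Fin N) (Fin N) ℂ)
    (hBc0 : ∀ y, Bc 0 y = 1)
    (hBcS : ∀ n y, Bc (n + 1) y = B y * Bc n (R y)) :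
    ∀ ε : ℝ, 0 < ε → ∃ δ : ℝ, 0 < δ ∧
      ∀ (n : ℕ) (y : EuclideanSpace ℝ (Fin m)), ‖y‖ < δ →
        (lam ^ n)⁻¹ *
          ‖Matrix.toEuclideanCLM (𝕜 := ℂ)
            (Bc n y - (M ^ n).map Complex.ofReal)‖ < ε := by
  have hBT : B = fourierMatrix T := funext fun y => Matrix.ext (hB y)
  have hMT : M = cardMatrix T := Matrix.ext hM
  subst hBT hMT
  have hMnonneg : ∀ i j, 0 ≤ cardMatrix T i j := fun i j => Nat.cast_nonneg _
  have hmap :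
      ∀ k, (cardMatrix T ^ k).map Complex.ofReal = (cardMatrix T).map Complex.ofReal ^ k :=
    Matrix.map_pow _ Complex.ofRealHom
  have hpow : ∀ k, ‖(cardMatrix T).map Complex.ofReal ^ k‖ ≤ (∑ i, ∑ j, v i / v j) * lam ^ k :=
    fun k => Matrix.l2_opNorm_le_of_norm_apply_le_pow_apply hMnonneg hv hvpos fun i j => by
      rw [← hmap, Matrix.map_apply, Complex.norm_real,
        Real.norm_of_nonneg (Matrix.pow_apply_nonneg hMnonneg k i j)]
  have hBc : ∀ k y, ‖Bc k y‖ ≤ (∑ i, ∑ j, v i / v j) * lam ^ k := fun k y =>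
    Matrix.l2_opNorm_le_of_norm_apply_le_pow_apply hMnonneg hv hvpos
      (Matrix.norm_cocycle_apply_le_pow_apply (norm_fourierMatrix_apply_le T) hBc0 hBcS k y)
  have hbound := fun n y => norm_cocycle_sub_pow_le (n := n) (y := y) hBc0 hBcS hpow hBc
    (l2_opNorm_fourierMatrix_sub_le T) (by positivity) (norm_nonneg R) hRcontr R.le_opNorm hlam.le
  simp only [← hmap] at hbound
  exact fun ε hε => exists_forall_norm_lt_inv_pow_mul_lt (zero_lt_one.trans hlam) hbound hε

/-- the sequence `(λ⁻ⁿ(B⁽ⁿ⁾(y) − Mⁿ))ₙ` is equicontinuous at `y = 0`: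
for every `ε > 0` there is `δ > 0` with `λ⁻ⁿ‖B⁽ⁿ⁾(y) − Mⁿ‖₂ < ε` for all `n` and
all `‖y‖₂ < δ`. -/
theorem stmt7
    {N m : ℕ} (hN : 1 ≤ N) (hm : 1 ≤ m)
    (T : Fin N → Fin N → Finset (EuclideanSpace ℝ (Fin m)))
    (M : Matrix (Fin N) (Fin N) ℝ)
    (hM : ∀ i j, M i j = (T i j).card)
    (hprim : ∃ k : ℕ, ∀ i j, 0 < (M ^ k) i j)
    (lam : ℝ) (hlam : 1 < lam)
    (u v : Fin N → ℝ)
    (hu : M.vecMul u = lam • u) (hv : M.mulVec v = lam • v)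
    (hupos : ∀ i, 0 < u i) (hvpos : ∀ i, 0 < v i)
    (hvsum : ∑ i, v i = 1) (huv : ∑ i, u i * v i = 1)
    (B : EuclideanSpace ℝ (Fin m) → Matrix (Fin N) (Fin N) ℂ)
    (hB : ∀ y i j, B y i j =
      ∑ x ∈ T i j, Complex.exp (2 * Real.pi * Complex.I * ((inner ℝ x y : ℝ) : ℂ)))
    (R : EuclideanSpace ℝ (Fin m) →L[ℝ] EuclideanSpace ℝ (Fin m))
    (hRnormal : R.comp (ContinuousLinearMap.adjoint R) =
      (ContinuousLinearMap.adjoint R).comp R)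
    (hRcontr : ‖R‖ < 1)
    (Bc : ℕ → EuclideanSpace ℝ (Fin m) → Matrix (Fin N) (Fin N) ℂ)
    (hBc0 : ∀ y, Bc 0 y = 1)
    (hBcS : ∀ n y, Bc (n + 1) y = B y * Bc n (R y)) :
    ∀ ε : ℝ, 0 < ε → ∃ δ : ℝ, 0 < δ ∧
      ∀ (n : ℕ) (y : EuclideanSpace ℝ (Fin m)), ‖y‖ < δ →
        (lam ^ n)⁻¹ *
          ‖Matrix.toEuclideanCLM (𝕜 := ℂ)
            (Bc n y - (M ^ n).map Complex.ofReal)‖ < ε :=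
  stmt7_general T M hM lam hlam v hv hvpos B hB R hRcontr Bc hBc0 hBcS
end

section
/- The limit matrix function C(y) = lim_{n→∞} λ^{−n} B^{(n)}(y) satisfies C(0) = P, and for every y ∈ ℝ^m one has C(y)·M = λ·C(y) and C(y) = C(y)·P. Consequently, every row of C(y) is a scalar multiple of the left Perron eigenvector ⟨u|, so that C(y) = |c(y)⟩⟨u| for a continuous vector-valued function c : ℝ^m → ℂ^N with c(0) = |v⟩; in particular, C(y) has rank at most 1 for every y. -/
open Filter Matrix Topology

/-!
Since `λ⁻ⁿ⁻¹ B⁽ⁿ⁺¹⁾(y) = λ⁻¹ (λ⁻ⁿ B⁽ⁿ⁾(y)) B(Rⁿ y)` and `Rⁿ y → 0`, continuity of `B` with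
`B(0) = M` gives `C(y) M = λ C(y)` in the limit. By Perron–Frobenius uniqueness for the primitive
matrix `M`, every row of `C(y)` is then a multiple of `⟨u|`, so `C(y) = |C(y) v⟩⟨u|`. At the fixed
point `y = 0` the cocycle is `B⁽ⁿ⁾(0) = Mⁿ`, whence `C(0) v = lim λ⁻ⁿ Mⁿ v = v` and `C(0) = P`.
-/

section Eigenvectors

variable {ι : Type*} [Fintype ι] [DecidableEq ι]

theorem Matrix.pow_mulVec_eq_pow_smul {R α : Type*} [Semiring α] [Monoid R] [DistribMulAction R α]
    [SMulCommClass R α α] {A : Matrix ι ι α} {r : R} {v : ι → α} (hv : A *ᵥ v = r • v) :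
    ∀ n : ℕ, A ^ n *ᵥ v = r ^ n • v
  | 0 => by simp
  | n + 1 => by
    rw [pow_succ', ← mulVec_mulVec, pow_mulVec_eq_pow_smul hv n, mulVec_smul, hv, smul_smul,
      pow_succ]

theorem Matrix.vecMul_pow_eq_pow_smul {R α : Type*} [Semiring α] [Monoid R] [DistribMulAction R α]
    [IsScalarTower R α α] {A : Matrix ι ι α} {r : R} {w : ι → α} (hw : w ᵥ* A = r • w) :
    ∀ n : ℕ, w ᵥ* A ^ n = r ^ n • w
  | 0 => by simp
  | n + 1 => by
    rw [pow_succ, ← vecMul_vecMul, vecMul_pow_eq_pow_smul hw n, smul_vecMul, hw, smul_smul,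
      pow_succ]

variable {M : Matrix ι ι ℝ} {k : ℕ} {r : ℝ} {u : ι → ℝ}

-- Minimum-ratio argument: `z = w - t • u` is nonnegative and vanishes at the index where
-- `w i / u i` is minimal, whereas `z ᵥ* M ^ k` would be strictly positive if `z ≠ 0`.
theorem Matrix.exists_eq_smul_of_vecMul_eq_smul (hk : ∀ i j, 0 < (M ^ k) i j)
    (hu_pos : ∀ i, 0 < u i) (hu : u ᵥ* M = r • u) {w : ι → ℝ} (hw : w ᵥ* M = r • w) :
    ∃ t : ℝ, w = t • u := by
  rcases isEmpty_or_nonempty ι with hι | hι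
  · exact ⟨0, Subsingleton.elim _ _⟩
  obtain ⟨i₀, -, hi₀⟩ :=
    Finset.univ.exists_min_image (fun i => w i / u i) Finset.univ_nonempty
  set t := w i₀ / u i₀
  set z := w - t • u
  have hz_nonneg : ∀ i, 0 ≤ z i := fun i => by
    have := (le_div_iff₀ (hu_pos i)).1 (hi₀ i (Finset.mem_univ i))
    simp only [z, Pi.sub_apply, Pi.smul_apply, smul_eq_mul]
    linarith
  have hz_i₀ : z i₀ = 0 := by
    simp [z, t, div_mul_cancel₀ _ (hu_pos i₀).ne']
  have hz : z ᵥ* M = r • z := by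
    rw [sub_vecMul, smul_vecMul, hw, hu, smul_comm, smul_sub]
  refine ⟨t, sub_eq_zero.1 ?_⟩
  by_contra hz0
  obtain ⟨j, hj⟩ := Function.ne_iff.1 hz0
  have hpos : 0 < (z ᵥ* M ^ k) i₀ :=
    Finset.sum_pos' (fun l _ => mul_nonneg (hz_nonneg l) (hk l i₀).le)
      ⟨j, Finset.mem_univ j, mul_pos ((hz_nonneg j).lt_of_ne' hj) (hk j i₀)⟩
  simp [vecMul_pow_eq_pow_smul hz k, hz_i₀] at hpos

end Eigenvectors

section ComplexEigenvectors

variable {ι : Type*} [Fintype ι]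

theorem Complex.re_vecMul_map_ofReal {ι' : Type*} (w : ι → ℂ) (A : Matrix ι ι' ℝ) (j : ι') :
    ((w ᵥ* A.map Complex.ofReal) j).re = ((fun i => (w i).re) ᵥ* A) j := by
  simp [vecMul, dotProduct, Complex.re_sum]

theorem Complex.im_vecMul_map_ofReal {ι' : Type*} (w : ι → ℂ) (A : Matrix ι ι' ℝ) (j : ι') :
    ((w ᵥ* A.map Complex.ofReal) j).im = ((fun i => (w i).im) ᵥ* A) j := by
  simp [vecMul, dotProduct, Complex.im_sum]

variable [DecidableEq ι] {M : Matrix ι ι ℝ} {k : ℕ} {r : ℝ} {u : ι → ℝ}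

theorem Matrix.exists_eq_smul_of_vecMul_map_ofReal_eq_smul (hk : ∀ i j, 0 < (M ^ k) i j)
    (hu_pos : ∀ i, 0 < u i) (hu : u ᵥ* M = r • u) {w : ι → ℂ}
    (hw : w ᵥ* M.map Complex.ofReal = r • w) :
    ∃ t : ℂ, w = t • (Complex.ofReal ∘ u) := by
  obtain ⟨a, ha⟩ := exists_eq_smul_of_vecMul_eq_smul hk hu_pos hu (w := fun i => (w i).re) <|
    funext fun j => by
      simpa [Complex.re_vecMul_map_ofReal] using congrArg Complex.re (congrFun hw j)
  obtain ⟨b, hb⟩ := exists_eq_smul_of_vecMul_eq_smul hk hu_pos hu (w := fun i => (w i).im) <|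
    funext fun j => by
      simpa [Complex.im_vecMul_map_ofReal] using congrArg Complex.im (congrFun hw j)
  refine ⟨⟨a, b⟩, funext fun i => Complex.ext ?_ ?_⟩
  · simpa using congrFun ha i
  · simpa using congrFun hb i

theorem Matrix.eq_vecMulVec_of_mul_map_ofReal_eq_smul {ι' : Type*} (hk : ∀ i j, 0 < (M ^ k) i j)
    (hu_pos : ∀ i, 0 < u i) (hu : u ᵥ* M = r • u) {v : ι → ℝ} (huv : u ⬝ᵥ v = 1)
    {A : Matrix ι' ι ℂ} (hA : A * M.map Complex.ofReal = r • A) :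
    A = vecMulVec (A *ᵥ (Complex.ofReal ∘ v)) (Complex.ofReal ∘ u) := by
  have huv' : (Complex.ofReal ∘ u) ⬝ᵥ (Complex.ofReal ∘ v) = 1 := by
    simp only [dotProduct, Function.comp_apply]
    exact_mod_cast huv
  ext i j
  obtain ⟨t, ht⟩ := exists_eq_smul_of_vecMul_map_ofReal_eq_smul hk hu_pos hu (congrFun hA i)
  have hrow : A i = t • (Complex.ofReal ∘ u) := ht
  rw [vecMulVec_apply, mulVec, hrow, smul_dotProduct, huv', smul_eq_mul, mul_one]
  rfl

end ComplexEigenvectors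

section Cocycle

variable {X : Type*} {g : X → X}

theorem cocycle_succ_eq_mul_iterate {G : Type*} [Monoid G] {B : X → G} {Bc : ℕ → X → G}
    (h0 : ∀ y, Bc 0 y = 1)
    (hS : ∀ n y, Bc (n + 1) y = B y * Bc n (g y)) : ∀ n y, Bc (n + 1) y = Bc n y * B (g^[n] y)
  | 0, y => by simp [hS, h0]
  | n + 1, y => by
    rw [hS, cocycle_succ_eq_mul_iterate h0 hS n (g y), hS, mul_assoc, Function.iterate_succ_apply]

theorem cocycle_eq_pow_of_isFixedPt {G : Type*} [Monoid G] {B : X → G} {Bc : ℕ → X → G}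
    (h0 : ∀ y, Bc 0 y = 1)
    (hS : ∀ n y, Bc (n + 1) y = B y * Bc n (g y)) {x : X} (hx : Function.IsFixedPt g x) :
    ∀ n, Bc n x = B x ^ n
  | 0 => by rw [h0, pow_zero]
  | n + 1 => by rw [hS, hx.eq, cocycle_eq_pow_of_isFixedPt h0 hS hx n, pow_succ']

theorem mul_eq_smul_of_tendsto_inv_pow_smul_cocycle {A : Type*} [Ring A] [Algebra ℝ A]
    [TopologicalSpace A] [IsTopologicalRing A] [ContinuousConstSMul ℝ A] [T2Space A]
    {B : X → A} {Bc : ℕ → X → A} (h0 : ∀ y, Bc 0 y = 1)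
    (hS : ∀ n y, Bc (n + 1) y = B y * Bc n (g y)) {lam : ℝ} (hlam : lam ≠ 0) {y : X} {L D : A}
    (hD : Tendsto (fun n => (lam ^ n)⁻¹ • Bc n y) atTop (𝓝 D))
    (hL : Tendsto (fun n => B (g^[n] y)) atTop (𝓝 L)) :
    D * L = lam • D := by
  have hshift : Tendsto (fun n => (lam ^ (n + 1))⁻¹ • Bc (n + 1) y) atTop (𝓝 D) :=
    hD.comp (tendsto_add_atTop_nat 1)
  have hstep : Tendsto (fun n => (lam ^ (n + 1))⁻¹ • Bc (n + 1) y) atTop (𝓝 (lam⁻¹ • (D * L))) :=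
    ((hD.mul hL).const_smul lam⁻¹).congr fun n => by
      rw [cocycle_succ_eq_mul_iterate h0 hS, smul_mul_assoc, smul_smul, pow_succ, mul_inv,
        mul_comm]
  conv_rhs => rw [tendsto_nhds_unique hshift hstep]
  rw [smul_inv_smul₀ hlam]

end Cocycle

theorem ContinuousLinearMap.tendsto_iterate_nhds_zero {𝕜 E : Type*} [NontriviallyNormedField 𝕜]
    [NormedAddCommGroup E] [NormedSpace 𝕜 E] {R : E →L[𝕜] E} (hR : ‖R‖ < 1) (y : E) :
    Tendsto (fun n => R^[n] y) atTop (𝓝 0) := by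
  have := ((apply 𝕜 E y).continuous.tendsto 0).comp (tendsto_pow_atTop_nhds_zero_of_norm_lt_one hR)
  simpa [Function.comp_def, FunLike.coe_pow_eq_iterate] using this

theorem Matrix.mulVec_eq_self_of_tendsto_inv_pow_smul_pow {ι : Type*} [Fintype ι] [DecidableEq ι]
    {A L : Matrix ι ι ℂ} {lam : ℝ} (hlam : lam ≠ 0) {v : ι → ℂ} (hv : A *ᵥ v = lam • v)
    (hL : Tendsto (fun n => (lam ^ n)⁻¹ • A ^ n) atTop (𝓝 L)) :
    L *ᵥ v = v := by
  have hlim := ((continuous_id.matrix_mulVec (continuous_const (y := v))).tendsto L).comp hL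
  refine tendsto_nhds_unique hlim (tendsto_const_nhds.congr fun n => Eq.symm ?_)
  show ((lam ^ n)⁻¹ • A ^ n) *ᵥ v = v
  rw [smul_mulVec, pow_mulVec_eq_pow_smul hv, inv_smul_smul₀ (pow_ne_zero n hlam)]

theorem stmt10_general
    {N m : ℕ}
    (T : Fin N → Fin N → Finset (EuclideanSpace ℝ (Fin m)))
    (M : Matrix (Fin N) (Fin N) ℝ)
    (hM : ∀ i j, M i j = (T i j).card)
    (hprim : ∃ k : ℕ, ∀ i j, 0 < (M ^ k) i j)
    (lam : ℝ) (hlam : 1 < lam)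
    (u v : Fin N → ℝ)
    (hu : M.vecMul u = lam • u) (hv : M.mulVec v = lam • v)
    (hupos : ∀ i, 0 < u i)
    (huv : ∑ i, u i * v i = 1)
    (P : Matrix (Fin N) (Fin N) ℝ)
    (hPdef : ∀ i j, P i j = v i * u j)
    (B : EuclideanSpace ℝ (Fin m) → Matrix (Fin N) (Fin N) ℂ)
    (hB : ∀ y i j, B y i j =
      ∑ x ∈ T i j, Complex.exp (2 * Real.pi * Complex.I * ((inner ℝ x y : ℝ) : ℂ)))
    (R : EuclideanSpace ℝ (Fin m) →L[ℝ] EuclideanSpace ℝ (Fin m))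
    (hRcontr : ‖R‖ < 1)
    (Bc : ℕ → EuclideanSpace ℝ (Fin m) → Matrix (Fin N) (Fin N) ℂ)
    (hBc0 : ∀ y, Bc 0 y = 1)
    (hBcS : ∀ n y, Bc (n + 1) y = B y * Bc n (R y))
    (C : EuclideanSpace ℝ (Fin m) → Matrix (Fin N) (Fin N) ℂ)
    (hC : ∀ y i j, Tendsto (fun n : ℕ => (lam ^ n)⁻¹ • Bc n y i j)
      atTop (𝓝 (C y i j)))
    (hCcont : ∀ i j, Continuous fun y => C y i j) :
    C 0 = P.map Complex.ofReal ∧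
    (∀ y, C y * M.map Complex.ofReal = lam • C y) ∧
    (∀ y, C y = C y * P.map Complex.ofReal) ∧
    (∃ c : EuclideanSpace ℝ (Fin m) → Fin N → ℂ,
      (∀ i, Continuous fun y => c y i) ∧
      (∀ i, c 0 i = (v i : ℂ)) ∧
      (∀ y i j, C y i j = c y i * (u j : ℂ))) ∧
    (∀ y, (C y).rank ≤ 1) := by
  obtain ⟨k, hk⟩ := hprim
  have hlam0 : lam ≠ 0 := (zero_lt_one.trans hlam).ne'
  have hB0 : B 0 = M.map Complex.ofReal := by
    ext i j
    simp [hB, hM]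
  have hBcont : Continuous B :=
    continuous_pi fun i => continuous_pi fun j => by simp only [hB]; fun_prop
  have hlim (y) : Tendsto (fun n => (lam ^ n)⁻¹ • Bc n y) atTop (𝓝 (C y)) :=
    tendsto_pi_nhds.2 fun i => tendsto_pi_nhds.2 (hC y i)
  have hCM (y) : C y * M.map Complex.ofReal = lam • C y :=
    mul_eq_smul_of_tendsto_inv_pow_smul_cocycle hBc0 hBcS hlam0 (hlim y)
      (hB0 ▸ (hBcont.tendsto 0).comp (R.tendsto_iterate_nhds_zero hRcontr y))
  have hC_eq (y) : C y = vecMulVec (C y *ᵥ (Complex.ofReal ∘ v)) (Complex.ofReal ∘ u) :=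
    eq_vecMulVec_of_mul_map_ofReal_eq_smul hk hupos hu huv (hCM y)
  have hC0v : C 0 *ᵥ (Complex.ofReal ∘ v) = Complex.ofReal ∘ v := by
    refine mulVec_eq_self_of_tendsto_inv_pow_smul_pow hlam0 (A := M.map Complex.ofReal) ?_ ?_
    · ext i
      simpa [mulVec, dotProduct, Complex.real_smul] using congrArg Complex.ofReal (congrFun hv i)
    · simpa [cocycle_eq_pow_of_isFixedPt hBc0 hBcS (map_zero R), hB0] using hlim 0
  have hP : P.map Complex.ofReal = vecMulVec (Complex.ofReal ∘ v) (Complex.ofReal ∘ u) := by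
    ext i j
    simp [hPdef, vecMulVec_apply]
  have hc_cont : Continuous fun y => C y *ᵥ (Complex.ofReal ∘ v) :=
    (continuous_pi fun i => continuous_pi (hCcont i)).matrix_mulVec continuous_const
  refine ⟨by rw [hC_eq 0, hC0v, hP], hCM, fun y => by rw [hP, mul_vecMulVec, ← hC_eq],
    ⟨fun y => C y *ᵥ (Complex.ofReal ∘ v), fun i => (continuous_apply i).comp hc_cont,
      fun i => congrFun hC0v i, fun y => congrFun₂ (hC_eq y)⟩,
    fun y => hC_eq y ▸ rank_vecMulVec_le _ _⟩

/-- the limit `C(y) = lim λ⁻ⁿ B⁽ⁿ⁾(y)` satisfies `C(0) = P`,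
`C(y)·M = λ·C(y)` and `C(y) = C(y)·P`; hence `C(y) = |c(y)⟩⟨u|` for a continuous
vector function `c` with `c(0) = v`, and `C(y)` has rank at most one. -/
theorem stmt10
    {N m : ℕ} (hN : 1 ≤ N) (hm : 1 ≤ m)
    (T : Fin N → Fin N → Finset (EuclideanSpace ℝ (Fin m)))
    (M : Matrix (Fin N) (Fin N) ℝ)
    (hM : ∀ i j, M i j = (T i j).card)
    (hprim : ∃ k : ℕ, ∀ i j, 0 < (M ^ k) i j)
    (lam : ℝ) (hlam : 1 < lam)
    (u v : Fin N → ℝ)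
    (hu : M.vecMul u = lam • u) (hv : M.mulVec v = lam • v)
    (hupos : ∀ i, 0 < u i) (hvpos : ∀ i, 0 < v i)
    (hvsum : ∑ i, v i = 1) (huv : ∑ i, u i * v i = 1)
    (P : Matrix (Fin N) (Fin N) ℝ)
    (hPdef : ∀ i j, P i j = v i * u j)
    (B : EuclideanSpace ℝ (Fin m) → Matrix (Fin N) (Fin N) ℂ)
    (hB : ∀ y i j, B y i j =
      ∑ x ∈ T i j, Complex.exp (2 * Real.pi * Complex.I * ((inner ℝ x y : ℝ) : ℂ)))
    (R : EuclideanSpace ℝ (Fin m) →L[ℝ] EuclideanSpace ℝ (Fin m))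
    (hRnormal : R.comp (ContinuousLinearMap.adjoint R) =
      (ContinuousLinearMap.adjoint R).comp R)
    (hRcontr : ‖R‖ < 1)
    (Bc : ℕ → EuclideanSpace ℝ (Fin m) → Matrix (Fin N) (Fin N) ℂ)
    (hBc0 : ∀ y, Bc 0 y = 1)
    (hBcS : ∀ n y, Bc (n + 1) y = B y * Bc n (R y))
    (C : EuclideanSpace ℝ (Fin m) → Matrix (Fin N) (Fin N) ℂ)
    (hC : ∀ y i j, Tendsto (fun n : ℕ => (lam ^ n)⁻¹ • Bc n y i j)
      atTop (𝓝 (C y i j)))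
    (hCcont : ∀ i j, Continuous fun y => C y i j) :
    C 0 = P.map Complex.ofReal ∧
    (∀ y, C y * M.map Complex.ofReal = lam • C y) ∧
    (∀ y, C y = C y * P.map Complex.ofReal) ∧
    (∃ c : EuclideanSpace ℝ (Fin m) → Fin N → ℂ,
      (∀ i, Continuous fun y => c y i) ∧
      (∀ i, c 0 i = (v i : ℂ)) ∧
      (∀ y i j, C y i j = c y i * (u j : ℂ))) ∧
    (∀ y, (C y).rank ≤ 1) :=
  stmt10_general T M hM hprim lam hlam u v hu hv hupos huv P hPdef B hB R hRcontr Bc hBc0 hBcS C hC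
    hCcont
end

section
/- Suppose the unique solution (W_1,…,W_N) of the window IFS is row-wise measure-disjoint and each vol(W_i) > 0, so that vol(W_i) = η·v_i for some η > 0. Fix α > 0. Then the absolutely continuous measures μ_i := (α·v_i / vol(W_i)) · (Lebesgue measure restricted to W_i), equivalently μ_i with Radon–Nikodym density g_i = (α·v_i/vol(W_i))·1_{W_i}, satisfy μ_i = λ^{−1} Σ_{j=1}^{N} Σ_{t∈T_{ij}} (x ↦ Q·x + t)_*(μ_j) for every 1 ≤ i ≤ N, together with total mass ‖μ_i‖ = α·v_i. -/
/-!
Each affine piece `x ↦ Q x + t` pushes Lebesgue measure forward to `|det Q|⁻¹ = λ` times Lebesgue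
measure, so it maps `Leb|_{W_j}` to `λ · Leb|_{Q W_j + t}`. Since `vol W_i = η v_i`, all the `μ_i`
have the same density `α / η` on their supports, and the a.e.-disjoint decomposition of `W_i`
into the pieces `Q W_j + t` splits `Leb|_{W_i}` into the sum of the `Leb|_{Q W_j + t}`.
-/

open MeasureTheory Set

namespace MeasureTheory.Measure

variable {α : Type*} [MeasurableSpace α] {μ : Measure α}

theorem restrict_iUnion_biUnion_finset₀ {ι κ : Type*} [Fintype ι] {T : ι → Finset κ}
    {s : ι → κ → Set α}
    (hd : ∀ i j, ∀ t ∈ T i, ∀ t' ∈ T j, (i, t) ≠ (j, t') → μ (s i t ∩ s j t') = 0)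
    (hm : ∀ i, ∀ t ∈ T i, NullMeasurableSet (s i t) μ) :
    μ.restrict (⋃ i, ⋃ t ∈ T i, s i t) = ∑ i, ∑ t ∈ T i, μ.restrict (s i t) := by
  have hunion : ⋃ i, ⋃ t ∈ T i, s i t = ⋃ p : (Σ i, T i), s p.1 p.2 := by
    ext x
    simp only [mem_iUnion, Sigma.exists, Subtype.exists, exists_prop]
  have hpair : Pairwise fun p q : (Σ i, T i) => AEDisjoint μ (s p.1 p.2) (s q.1 q.2) := by
    rintro ⟨i, t, ht⟩ ⟨j, t', ht'⟩ hne
    refine hd i j t ht t' ht' fun h => hne ?_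
    obtain ⟨rfl, rfl⟩ := Prod.mk.inj h
    rfl
  rw [hunion, restrict_iUnion_ae hpair fun p => hm _ _ p.2.2, sum_fintype, Fintype.sum_sigma]
  exact Finset.sum_congr rfl fun i _ => Finset.sum_coe_sort (T i) (fun t => μ.restrict (s i t))

end MeasureTheory.Measure

section AffineAddHaar

variable {E : Type*} [NormedAddCommGroup E] [NormedSpace ℝ E] [MeasurableSpace E] [BorelSpace E]
  [FiniteDimensional ℝ E] (μ : Measure E) [μ.IsAddHaarMeasure]

theorem ContinuousLinearMap.measurableEmbedding_add_const {f : E →L[ℝ] E} (hf : f.det ≠ 0)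
    (t : E) : MeasurableEmbedding fun x => f x + t :=
  ((f.toLinearMap.equivOfDetNeZero hf).toContinuousLinearEquiv.toHomeomorph.trans
    (Homeomorph.addRight t)).measurableEmbedding

theorem MeasureTheory.Measure.map_continuousLinearMap_add_const_addHaar {f : E →L[ℝ] E}
    (hf : f.det ≠ 0) (t : E) :
    map (fun x => f x + t) μ = ENNReal.ofReal |f.det⁻¹| • μ := by
  have hcomp : (fun x => f x + t) = (· + t) ∘ f := rfl
  rw [hcomp, ← map_map (measurable_add_const t) f.continuous.measurable,
    ← f.coe_coe, map_linearMap_addHaar_eq_smul_addHaar μ hf, Measure.map_smul,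
    map_add_right_eq_self]

theorem MeasureTheory.Measure.map_continuousLinearMap_add_const_restrict_addHaar
    {f : E →L[ℝ] E} (hf : f.det ≠ 0) (t : E) (s : Set E) :
    map (fun x => f x + t) (μ.restrict s) =
      ENNReal.ofReal |f.det⁻¹| • μ.restrict ((fun x => f x + t) '' s) := by
  have he := f.measurableEmbedding_add_const hf t
  rw [← restrict_smul, ← map_continuousLinearMap_add_const_addHaar μ hf t, he.restrict_map,
    preimage_image_eq _ he.injective]

end AffineAddHaar

theorem stmt12_general
    {N m : ℕ}
    (T : Fin N → Fin N → Finset (EuclideanSpace ℝ (Fin m)))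
    (lam : ℝ) (hlam : 1 < lam)
    (v : Fin N → ℝ)
    (hvpos : ∀ i, 0 < v i)
    (Q : EuclideanSpace ℝ (Fin m) →L[ℝ] EuclideanSpace ℝ (Fin m))
    (hQdet : |Q.det| = 1 / lam)
    (W : Fin N → Set (EuclideanSpace ℝ (Fin m)))
    (hWcp : ∀ i, IsCompact (W i))
    (hIFS : ∀ i, W i = ⋃ j, ⋃ t ∈ T i j, (fun x => Q x + t) '' W j)
    (hdisj : ∀ i j j' : Fin N, ∀ t ∈ T i j, ∀ t' ∈ T i j', (j, t) ≠ (j', t') →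
      volume (((fun x => Q x + t) '' W j) ∩ ((fun x => Q x + t') '' W j')) = 0)
    (η : ℝ) (hη : 0 < η)
    (hvol : ∀ i, volume (W i) = ENNReal.ofReal (η * v i))
    (α : ℝ)
    (μ : Fin N → Measure (EuclideanSpace ℝ (Fin m)))
    (hμ : ∀ i, μ i =
      (ENNReal.ofReal (α * v i) / volume (W i)) • volume.restrict (W i)) :
    ∀ i, μ i = (ENNReal.ofReal lam)⁻¹ •
        ∑ j, ∑ t ∈ T i j, Measure.map (fun x => Q x + t) (μ j) ∧
      μ i Set.univ = ENNReal.ofReal (α * v i) := by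
  have hlam0 : 0 < lam := one_pos.trans hlam
  have hdet : Q.det ≠ 0 := fun h => by
    rw [h, abs_zero, eq_comm, one_div, inv_eq_zero] at hQdet
    exact hlam0.ne' hQdet
  have hdet_inv : ENNReal.ofReal |Q.det⁻¹| = ENNReal.ofReal lam := by
    rw [abs_inv, hQdet, one_div, inv_inv]
  have hvol_pos : ∀ i, volume (W i) ≠ 0 := fun i => by
    rw [hvol i]
    exact (ENNReal.ofReal_pos.mpr (mul_pos hη (hvpos i))).ne'
  have hdensity : ∀ j, μ j = ENNReal.ofReal (α / η) • volume.restrict (W j) := fun j => by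
    rw [hμ j, hvol j, ← ENNReal.ofReal_div_of_pos (mul_pos hη (hvpos j)),
      mul_div_mul_right _ _ (hvpos j).ne']
  have hpiece : ∀ j t, Measure.map (fun x => Q x + t) (μ j) = ENNReal.ofReal lam •
      ENNReal.ofReal (α / η) • volume.restrict ((fun x => Q x + t) '' W j) :=
    fun j t => by
      rw [hdensity j, Measure.map_smul,
        Measure.map_continuousLinearMap_add_const_restrict_addHaar volume hdet, hdet_inv, smul_comm]
  intro i
  refine ⟨?_, ?_⟩
  · have hsplit := Measure.restrict_iUnion_biUnion_finset₀ (μ := volume) (hdisj i) fun j t _ =>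
      ((hWcp j).image (Q.continuous.add continuous_const)).measurableSet.nullMeasurableSet
    simp only [hpiece, ← Finset.smul_sum]
    rw [← hIFS i] at hsplit
    rw [← hsplit, smul_smul, ENNReal.inv_mul_cancel (by positivity) ENNReal.ofReal_ne_top,
      one_smul, hdensity i]
  · rw [hμ i, Measure.smul_apply, Measure.restrict_apply_univ, smul_eq_mul,
      ENNReal.div_mul_cancel (hvol_pos i) (by rw [hvol i]; exact ENNReal.ofReal_ne_top)]

/-- the absolutely continuous measures
`μ_i = (α v_i / vol W_i) · Leb|_{W_i}` satisfy the measure IFS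
`μ_i = λ⁻¹ Σ_j Σ_{t∈T_{ij}} (x ↦ Qx+t)_*(μ_j)` and have total mass `α v_i`. -/
theorem stmt12
    {N m : ℕ} (hN : 1 ≤ N) (hm : 1 ≤ m)
    (T : Fin N → Fin N → Finset (EuclideanSpace ℝ (Fin m)))
    (M : Matrix (Fin N) (Fin N) ℝ)
    (hM : ∀ i j, M i j = (T i j).card)
    (hprim : ∃ k : ℕ, ∀ i j, 0 < (M ^ k) i j)
    (lam : ℝ) (hlam : 1 < lam)
    (v : Fin N → ℝ)
    (hv : M.mulVec v = lam • v) (hvpos : ∀ i, 0 < v i) (hvsum : ∑ i, v i = 1)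
    (Q : EuclideanSpace ℝ (Fin m) →L[ℝ] EuclideanSpace ℝ (Fin m))
    (hQbij : Function.Bijective Q)
    (hQcontr : ‖Q‖ < 1)
    (hQdet : |Q.det| = 1 / lam)
    (W : Fin N → Set (EuclideanSpace ℝ (Fin m)))
    (hWne : ∀ i, (W i).Nonempty) (hWcp : ∀ i, IsCompact (W i))
    (hIFS : ∀ i, W i = ⋃ j, ⋃ t ∈ T i j, (fun x => Q x + t) '' W j)
    (hdisj : ∀ i j j' : Fin N, ∀ t ∈ T i j, ∀ t' ∈ T i j', (j, t) ≠ (j', t') →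
      volume (((fun x => Q x + t) '' W j) ∩ ((fun x => Q x + t') '' W j')) = 0)
    (η : ℝ) (hη : 0 < η)
    (hvol : ∀ i, volume (W i) = ENNReal.ofReal (η * v i))
    (α : ℝ) (hα : 0 < α)
    (μ : Fin N → Measure (EuclideanSpace ℝ (Fin m)))
    (hμ : ∀ i, μ i =
      (ENNReal.ofReal (α * v i) / volume (W i)) • volume.restrict (W i)) :
    ∀ i, μ i = (ENNReal.ofReal lam)⁻¹ •
        ∑ j, ∑ t ∈ T i j, Measure.map (fun x => Q x + t) (μ j) ∧
      μ i Set.univ = ENNReal.ofReal (α * v i) :=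
  stmt12_general T lam hlam v hvpos Q hQdet W hWcp hIFS hdisj η hη hvol α μ hμ
end

section
/- The quadruple of compact sets W_a = W_ā = [τ−2, τ−1] and W_b = W_b̄ = [−1, τ−2] is the unique quadruple (W_a, W_ā, W_b, W_b̄) of nonempty compact subsets of ℝ satisfying the system W_a = σ·W_a ∪ σ·W_b̄, W_ā = σ·W_ā ∪ σ·W_b, W_b = σ·W_a + σ, W_b̄ = σ·W_ā + σ. -/
/-!
The intervals solve the system by a direct computation of their images under `s ↦ ψ s` and
`s ↦ ψ s + ψ`, where `ψ = 1 - φ`. Uniqueness is Hutchinson's argument: `s ↦ ψ s` contracts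
Hausdorff distances by `|ψ| = φ⁻¹ < 1` and `s ↦ ψ s + ψ` does not expand them, so for two
solutions `W`, `V` the larger of `d_H(W_a, V_a)` and `d_H(W_ā, V_ā)` is at most `|ψ|` times
itself, hence zero.
-/

open Set Metric Real goldenRatio
open scoped NNReal ENNReal

theorem Set.image_const_mul_Icc_of_neg {𝕜 : Type*} [Field 𝕜] [LinearOrder 𝕜]
    [IsStrictOrderedRing 𝕜] {c : 𝕜} (hc : c < 0) (a b : 𝕜) :
    (c * ·) '' Icc a b = Icc (c * b) (c * a) := by
  rw [image_eq_preimage_of_inverse (f := (c * ·)) (g := (c⁻¹ * ·))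
    (fun x => inv_mul_cancel_left₀ hc.ne x) (fun x => mul_inv_cancel_left₀ hc.ne x),
    preimage_const_mul_Icc_of_neg _ _ (inv_lt_zero.2 hc), div_inv_eq_mul, div_inv_eq_mul,
    mul_comm b, mul_comm a]

theorem ENNReal.eq_zero_of_le_mul_of_lt_one {a K : ℝ≥0∞} (h : a ≤ K * a) (hK : K < 1)
    (ha : a ≠ ∞) : a = 0 := by
  by_contra h0
  exact (h.trans_lt (by simpa using ENNReal.mul_lt_mul_left h0 ha hK)).false

namespace LipschitzWith

variable {α β : Type*} [PseudoEMetricSpace α] [PseudoEMetricSpace β] {K : ℝ≥0}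
  {f : α → β}

theorem infEDist_image_le (hf : LipschitzWith K f) (hK : K ≠ 0) (x : α) (t : Set α) :
    infEDist (f x) (f '' t) ≤ K * infEDist x t := by
  have hK' : (K : ℝ≥0∞) ≠ 0 := by exact_mod_cast hK
  rw [infEDist, infEDist, ENNReal.mul_iInf_of_ne hK' ENNReal.coe_ne_top]
  refine le_iInf fun y => ?_
  rw [ENNReal.mul_iInf_of_ne hK' ENNReal.coe_ne_top]
  exact le_iInf fun hy => (infEDist_le_edist_of_mem (mem_image_of_mem f hy)).trans (hf x y)

theorem hausdorffEDist_image_le (hf : LipschitzWith K f) (hK : K ≠ 0) (s t : Set α) :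
    hausdorffEDist (f '' s) (f '' t) ≤ K * hausdorffEDist s t := by
  refine hausdorffEDist_le_of_infEDist ?_ ?_ <;> rintro _ ⟨x, hx, rfl⟩ <;>
    refine (hf.infEDist_image_le hK x _).trans (mul_le_mul_right ?_ _)
  · exact infEDist_le_hausdorffEDist_of_mem hx
  · exact hausdorffEDist_comm (s := s) ▸ infEDist_le_hausdorffEDist_of_mem hx

end LipschitzWith

section WindowIFS

variable {α : Type*}

/-- `Wab`, `Wbb` stand for `W_ā`, `W_b̄`; the twisted Fibonacci substitution has `f s = σ s` and
`g s = σ s + σ`. -/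
def IsWindowIFSSolution (f g : α → α) (Wa Wab Wb Wbb : Set α) : Prop :=
  Wa = f '' Wa ∪ f '' Wbb ∧ Wab = f '' Wab ∪ f '' Wb ∧ Wb = g '' Wa ∧ Wbb = g '' Wab

variable [PseudoEMetricSpace α] {f g : α → α} {K : ℝ≥0}

theorem hausdorffEDist_union_image_image_le (hf : LipschitzWith K f) (hK : K ≠ 0)
    (hg : LipschitzWith 1 g) (s t s' t' : Set α) :
    hausdorffEDist (f '' s ∪ f '' (g '' t)) (f '' s' ∪ f '' (g '' t')) ≤
      K * max (hausdorffEDist s s') (hausdorffEDist t t') := by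
  refine hausdorffEDist_union_le.trans (max_le ?_ ?_) <;>
    refine (hf.hausdorffEDist_image_le hK _ _).trans (mul_le_mul_right ?_ _)
  · exact le_max_left _ _
  · simpa using (hg.hausdorffEDist_image_le one_ne_zero t t').trans (le_max_right _ _)

theorem IsWindowIFSSolution.eq_of_lipschitzWith (hf : LipschitzWith K f) (hK : K < 1)
    (hg : LipschitzWith 1 g) {Wa Wab Wb Wbb Va Vab Vb Vbb : Set α}
    (hW : IsWindowIFSSolution f g Wa Wab Wb Wbb) (hV : IsWindowIFSSolution f g Va Vab Vb Vbb)
    (hWa : IsClosed Wa) (hWab : IsClosed Wab) (hVa : IsClosed Va) (hVab : IsClosed Vab)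
    (hda : hausdorffEDist Wa Va ≠ ∞) (hdab : hausdorffEDist Wab Vab ≠ ∞) :
    Wa = Va ∧ Wab = Vab ∧ Wb = Vb ∧ Wbb = Vbb := by
  obtain ⟨W1, W2, W3, W4⟩ := hW
  obtain ⟨V1, V2, V3, V4⟩ := hV
  -- `hausdorffEDist_image_le` needs a nonzero constant.
  obtain ⟨K', hKK', hK'⟩ := exists_between hK
  have hf' : LipschitzWith K' f := hf.weaken hKK'.le
  have hK'0 : K' ≠ 0 := (pos_of_gt hKK').ne'
  have hD : max (hausdorffEDist Wa Va) (hausdorffEDist Wab Vab) ≤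
      K' * max (hausdorffEDist Wa Va) (hausdorffEDist Wab Vab) := by
    refine max_le ?_ ?_
    · conv_lhs => rw [W1, V1, W4, V4]
      exact hausdorffEDist_union_image_image_le hf' hK'0 hg _ _ _ _
    · conv_lhs => rw [W2, V2, W3, V3]
      rw [max_comm]
      exact hausdorffEDist_union_image_image_le hf' hK'0 hg _ _ _ _
  have hD0 := ENNReal.eq_zero_of_le_mul_of_lt_one hD (ENNReal.coe_lt_one_iff.2 hK')
    (max_lt hda.lt_top hdab.lt_top).ne
  obtain ⟨hda0, hdab0⟩ := max_le_iff.1 hD0.le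
  have ha := (hWa.hausdorffEDist_zero_iff hVa).1 (nonpos_iff_eq_zero.1 hda0)
  have hab := (hWab.hausdorffEDist_zero_iff hVab).1 (nonpos_iff_eq_zero.1 hdab0)
  exact ⟨ha, hab, by rw [W3, V3, ha], by rw [W4, V4, hab]⟩

end WindowIFS

theorem nnnorm_goldenConj_lt_one : ‖ψ‖₊ < 1 := by
  rw [← NNReal.coe_lt_coe, coe_nnnorm, Real.norm_eq_abs, abs_lt]
  exact ⟨neg_one_lt_goldenConj, by linarith [goldenConj_neg]⟩

theorem isWindowIFSSolution_goldenConj :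
    IsWindowIFSSolution (ψ * ·) (ψ * · + ψ) (Icc (φ - 2) (φ - 1)) (Icc (φ - 2) (φ - 1))
      (Icc (-1) (φ - 2)) (Icc (-1) (φ - 2)) := by
  have hA : (ψ * ·) '' Icc (φ - 2) (φ - 1) = Icc (φ - 2) (2 * φ - 3) := by
    rw [image_const_mul_Icc_of_neg goldenConj_neg]; congr 1 <;> grind
  have hB : (ψ * ·) '' Icc (-1) (φ - 2) = Icc (2 * φ - 3) (φ - 1) := by
    rw [image_const_mul_Icc_of_neg goldenConj_neg]; congr 1 <;> grind
  have ha : Icc (φ - 2) (φ - 1) =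
      (ψ * ·) '' Icc (φ - 2) (φ - 1) ∪ (ψ * ·) '' Icc (-1) (φ - 2) := by
    rw [hA, hB, Icc_union_Icc_eq_Icc] <;> linarith [one_lt_goldenRatio, goldenRatio_lt_two]
  have hb : Icc (-1) (φ - 2) = (ψ * · + ψ) '' Icc (φ - 2) (φ - 1) := by
    rw [← image_image (· + ψ) (ψ * ·), hA, image_add_const_Icc]; congr 1 <;> grind
  exact ⟨ha, ha, hb, hb⟩

/-- the quadruple `W_a = W_ā = [τ−2,τ−1]`, `W_b = W_b̄ = [−1,τ−2]`
is the unique quadruple of nonempty compact subsets of `ℝ` solving the window IFS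
of the twisted Fibonacci substitution. -/
theorem stmt14
    (τ σ : ℝ) (hτ : τ = (1 + Real.sqrt 5) / 2) (hσ : σ = 1 - τ) :
    (((Icc (τ - 2) (τ - 1) : Set ℝ)).Nonempty ∧ IsCompact (Icc (τ - 2) (τ - 1)) ∧
     ((Icc (-1) (τ - 2) : Set ℝ)).Nonempty ∧ IsCompact (Icc (-1) (τ - 2)) ∧
     Icc (τ - 2) (τ - 1) =
       (fun s => σ * s) '' Icc (τ - 2) (τ - 1) ∪
         (fun s => σ * s) '' Icc (-1) (τ - 2) ∧
     Icc (-1) (τ - 2) = (fun s => σ * s + σ) '' Icc (τ - 2) (τ - 1)) ∧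
    (∀ Wa Wab Wb Wbb : Set ℝ,
      Wa.Nonempty → IsCompact Wa → Wab.Nonempty → IsCompact Wab →
      Wb.Nonempty → IsCompact Wb → Wbb.Nonempty → IsCompact Wbb →
      Wa = (fun s => σ * s) '' Wa ∪ (fun s => σ * s) '' Wbb →
      Wab = (fun s => σ * s) '' Wab ∪ (fun s => σ * s) '' Wb →
      Wb = (fun s => σ * s + σ) '' Wa →
      Wbb = (fun s => σ * s + σ) '' Wab →
      Wa = Icc (τ - 2) (τ - 1) ∧ Wab = Icc (τ - 2) (τ - 1) ∧
        Wb = Icc (-1) (τ - 2) ∧ Wbb = Icc (-1) (τ - 2)) := by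
  obtain rfl : τ = φ := hτ
  obtain rfl : σ = ψ := hσ.trans one_sub_goldenConj
  have hsol := isWindowIFSSolution_goldenConj
  have hIa : (Icc (φ - 2) (φ - 1)).Nonempty := nonempty_Icc.2 (by linarith)
  refine ⟨⟨hIa, isCompact_Icc, nonempty_Icc.2 (by linarith [one_lt_goldenRatio]), isCompact_Icc,
    hsol.1, hsol.2.2.1⟩, ?_⟩
  intro Wa Wab Wb Wbb hWa hWac hWab hWabc _ _ _ _ hWa_eq hWab_eq hWb_eq hWbb_eq
  have hf : LipschitzWith ‖ψ‖₊ (ψ * ·) := lipschitzWith_smul ψ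
  have hg : LipschitzWith 1 (ψ * · + ψ) :=
    ((isometry_add_right ψ).lipschitz.comp hf).weaken (by simpa using nnnorm_goldenConj_lt_one.le)
  have hfin {s t : Set ℝ} (hs : s.Nonempty) (hsc : IsCompact s) (ht : t.Nonempty)
      (htc : IsCompact t) : hausdorffEDist s t ≠ ∞ :=
    hausdorffEDist_ne_top_of_nonempty_of_bounded hs ht hsc.isBounded htc.isBounded
  exact IsWindowIFSSolution.eq_of_lipschitzWith hf nnnorm_goldenConj_lt_one hg
    ⟨hWa_eq, hWab_eq, hWb_eq, hWbb_eq⟩ hsol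
    hWac.isClosed hWabc.isClosed isClosed_Icc isClosed_Icc
    (hfin hWa hWac hIa isCompact_Icc) (hfin hWab hWabc hIa isCompact_Icc)
end

section
/- Let I = [−σ², −σ³] and g(x) = σ⁴·x + σ⁴ + σ². Then the unique nonempty compact subset W₁ of ℝ satisfying W₁ = I ∪ g(W₁) is the closure of the set ⋃_{n≥0} (σ^{4n}·[−σ², −σ³] + σ(σ^{4n} − 1)); this closure equals the union ⋃_{n≥0} (σ^{4n}·[−σ², −σ³] + σ(σ^{4n} − 1)) together with the single point −σ, which is the fixed point of g. -/
/-!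
The set `U` is the forward orbit `⋃ₙ gⁿ(I)` of the interval `I` under the affine contraction `g`,
whose fixed point is `-σ` because `σ² = σ + 1`. Any bounded `W` with `W = I ∪ g(W)` contains the
orbit, and each of its points outside the orbit lies in `gⁿ(W)` for every `n`, hence at distance
`≤ |σ|⁴ⁿ · R` from `-σ`: so `W ⊆ U ∪ {-σ}`. Conversely the pieces `gⁿ(I)` shrink to `-σ`, so
`U ∪ {-σ}` is closed; it equals `closure U`, which is compact since `U` is bounded.
-/

open Set Filter Topology Function Metric

section ForwardOrbit

variable {α : Type*} {g : α → α} {I W : Set α}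

def forwardOrbitSet (g : α → α) (I : Set α) : Set α := ⋃ n : ℕ, g^[n] '' I

theorem iterate_image_subset_forwardOrbitSet (n : ℕ) : g^[n] '' I ⊆ forwardOrbitSet g I :=
  subset_iUnion (fun k => g^[k] '' I) n

theorem forwardOrbitSet_eq_union_image (g : α → α) (I : Set α) :
    forwardOrbitSet g I = I ∪ g '' forwardOrbitSet g I := by
  rw [forwardOrbitSet, image_iUnion, ← union_iUnion_nat_succ]
  simp only [iterate_zero, image_id, iterate_succ', image_comp]

theorem forwardOrbitSet_subset (hW : I ∪ g '' W ⊆ W) : forwardOrbitSet g I ⊆ W := by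
  refine iUnion_subset fun n => ?_
  induction n with
  | zero => simpa using subset_union_left.trans hW
  | succ n ih =>
    rw [iterate_succ', image_comp]
    exact (image_mono ih).trans (subset_union_right.trans hW)

theorem subset_forwardOrbitSet_union_iterate_image (hW : W ⊆ I ∪ g '' W) (n : ℕ) :
    W ⊆ forwardOrbitSet g I ∪ g^[n] '' W := by
  induction n with
  | zero => simp
  | succ n ih =>
    calc W ⊆ forwardOrbitSet g I ∪ g^[n] '' W := ih
      _ ⊆ forwardOrbitSet g I ∪ g^[n] '' (I ∪ g '' W) := union_subset_union_right _ (image_mono hW)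
      _ = forwardOrbitSet g I ∪ g^[n] '' I ∪ g^[n + 1] '' W := by
        rw [image_union, iterate_succ, image_comp, union_assoc]
      _ ⊆ forwardOrbitSet g I ∪ g^[n + 1] '' W :=
        union_subset_union_left _ (union_subset subset_rfl (iterate_image_subset_forwardOrbitSet n))

end ForwardOrbit

namespace ContractingWith

variable {X : Type*} [MetricSpace X] {K : NNReal} {g : X → X} {p : X} {I W : Set X} {R : ℝ}

theorem dist_iterate_le (hg : ContractingWith K g) (hp : IsFixedPt g p) (n : ℕ) (x : X) :
    dist (g^[n] x) p ≤ K ^ n * dist x p := by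
  calc dist (g^[n] x) p = dist (g^[n] x) (g^[n] p) := by rw [(hp.iterate n).eq]
    _ ≤ _ := by exact_mod_cast (hg.2.iterate n).dist_le_mul x p

theorem iterate_image_subset_closedBall (hg : ContractingWith K g) (hp : IsFixedPt g p)
    (hI : I ⊆ closedBall p R) (n : ℕ) : g^[n] '' I ⊆ closedBall p (K ^ n * R) := by
  rintro _ ⟨x, hx, rfl⟩
  exact (hg.dist_iterate_le hp n x).trans
    (mul_le_mul_of_nonneg_left (hI hx) (pow_nonneg K.coe_nonneg n))

theorem tendsto_pow_mul_nhds_zero (hg : ContractingWith K g) (R : ℝ) :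
    Tendsto (fun n : ℕ => (K : ℝ) ^ n * R) atTop (𝓝 0) := by
  simpa using (tendsto_pow_atTop_nhds_zero_of_lt_one K.coe_nonneg hg.1).mul_const R

theorem eq_of_forall_mem_iterate_image (hg : ContractingWith K g) (hp : IsFixedPt g p)
    (hW : Bornology.IsBounded W) {x : X} (hx : ∀ n : ℕ, x ∈ g^[n] '' W) : x = p := by
  obtain ⟨R, hR⟩ := hW.subset_closedBall p
  have hdist : dist x p ≤ 0 :=
    ge_of_tendsto' (hg.tendsto_pow_mul_nhds_zero R)
      fun n => hg.iterate_image_subset_closedBall hp hR n (hx n)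
  exact dist_le_zero.1 hdist

theorem subset_insert_forwardOrbitSet (hg : ContractingWith K g) (hp : IsFixedPt g p)
    (hW : Bornology.IsBounded W) (hWI : W ⊆ I ∪ g '' W) : W ⊆ insert p (forwardOrbitSet g I) := by
  intro x hx
  by_cases hxI : x ∈ forwardOrbitSet g I
  · exact Or.inr hxI
  · exact Or.inl <| hg.eq_of_forall_mem_iterate_image hp hW fun n =>
      (subset_forwardOrbitSet_union_iterate_image hWI n hx).resolve_left hxI

theorem tendsto_iterate (hg : ContractingWith K g) (hp : IsFixedPt g p) (x : X) :
    Tendsto (fun n => g^[n] x) atTop (𝓝 p) :=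
  tendsto_iff_dist_tendsto_zero.2 <| squeeze_zero (fun _ => dist_nonneg)
    (fun n => hg.dist_iterate_le hp n x) (hg.tendsto_pow_mul_nhds_zero _)

/-- Beyond some `N` the pieces `gⁿ(I)` lie in a closed ball around `p` avoiding `x`, and the
finitely many pieces before `N` are compact, hence closed. -/
theorem closure_forwardOrbitSet (hg : ContractingWith K g) (hp : IsFixedPt g p)
    (hI : IsCompact I) (hI₀ : I.Nonempty) :
    closure (forwardOrbitSet g I) = insert p (forwardOrbitSet g I) := by
  refine Subset.antisymm (fun x hx => ?_) (insert_subset ?_ subset_closure)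
  · rcases eq_or_ne x p with rfl | hxp
    · exact mem_insert _ _
    obtain ⟨R, hR₀, hR⟩ := hI.isBounded.subset_closedBall_lt 0 p
    obtain ⟨N, hN⟩ := ((hg.tendsto_pow_mul_nhds_zero R).eventually
      (gt_mem_nhds (dist_pos.2 hxp))).exists
    have hcover : forwardOrbitSet g I ⊆
        (⋃ n ∈ Finset.range N, g^[n] '' I) ∪ closedBall p (K ^ N * R) := by
      refine iUnion_subset fun n => ?_
      rcases lt_or_ge n N with hn | hn
      · exact (subset_biUnion_of_mem (u := fun n => g^[n] '' I) (Finset.mem_range.2 hn)).trans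
          subset_union_left
      · refine (hg.iterate_image_subset_closedBall hp hR n).trans
          (subset_union_of_subset_right (closedBall_subset_closedBall ?_) _)
        exact mul_le_mul_of_nonneg_right (pow_le_pow_of_le_one K.coe_nonneg hg.1.le hn) hR₀.le
    have hclosed : IsClosed ((⋃ n ∈ Finset.range N, g^[n] '' I) ∪ closedBall p (K ^ N * R)) :=
      (isClosed_biUnion_finset fun n _ =>
        (hI.image (hg.2.continuous.iterate n)).isClosed).union isClosed_closedBall
    rcases closure_minimal hcover hclosed hx with hx | hx
    · obtain ⟨n, -, hn⟩ := mem_iUnion₂.1 hx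
      exact Or.inr (iterate_image_subset_forwardOrbitSet n hn)
    · exact absurd (mem_closedBall.1 hx) (not_le.2 hN)
  · obtain ⟨y, hy⟩ := hI₀
    exact mem_closure_of_tendsto (hg.tendsto_iterate hp y)
      (Eventually.of_forall fun n => iterate_image_subset_forwardOrbitSet n (mem_image_of_mem _ hy))

theorem isBounded_forwardOrbitSet (hg : ContractingWith K g) (hp : IsFixedPt g p)
    (hI : Bornology.IsBounded I) : Bornology.IsBounded (forwardOrbitSet g I) := by
  obtain ⟨R, hR₀, hR⟩ := hI.subset_closedBall_lt 0 p
  refine (isBounded_closedBall (x := p) (r := R)).subset (iUnion_subset fun n => ?_)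
  refine (hg.iterate_image_subset_closedBall hp hR n).trans (closedBall_subset_closedBall ?_)
  exact mul_le_of_le_one_left hR₀.le (pow_le_one₀ K.coe_nonneg hg.1.le)

theorem closure_forwardOrbitSet_eq_union_image (hg : ContractingWith K g) (hp : IsFixedPt g p)
    (hI : IsCompact I) (hI₀ : I.Nonempty) :
    closure (forwardOrbitSet g I) = I ∪ g '' closure (forwardOrbitSet g I) := by
  rw [hg.closure_forwardOrbitSet hp hI hI₀, image_insert_eq, hp.eq, union_insert,
    ← forwardOrbitSet_eq_union_image]

theorem eq_closure_forwardOrbitSet (hg : ContractingWith K g) (hp : IsFixedPt g p)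
    (hI : IsCompact I) (hI₀ : I.Nonempty) (hW : IsCompact W) (hWI : W = I ∪ g '' W) :
    W = closure (forwardOrbitSet g I) := by
  refine Subset.antisymm ?_ (closure_minimal (forwardOrbitSet_subset hWI.superset) hW.isClosed)
  rw [hg.closure_forwardOrbitSet hp hI hI₀]
  exact hg.subset_insert_forwardOrbitSet hp hW.isBounded hWI.subset

end ContractingWith

theorem contractingWith_mul_add_const {c : ℝ} (hc : |c| < 1) (d : ℝ) :
    ContractingWith ‖c‖₊ fun x => c * x + d := by
  refine ⟨by simpa [← NNReal.coe_lt_coe] using hc, LipschitzWith.of_dist_le_mul fun x y => ?_⟩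
  simp [Real.dist_eq, ← mul_sub, abs_mul]

section GoldenConj

variable {σ : ℝ}

theorem isFixedPt_neg_of_sq_eq_add_one (hσ : σ ^ 2 = σ + 1) :
    IsFixedPt (fun x => σ ^ 4 * x + σ ^ 4 + σ ^ 2) (-σ) := by
  change σ ^ 4 * (-σ) + σ ^ 4 + σ ^ 2 = -σ
  linear_combination (-σ ^ 3 - σ) * hσ

theorem iterate_eq_of_sq_eq_add_one (hσ : σ ^ 2 = σ + 1) (n : ℕ) :
    (fun x => σ ^ 4 * x + σ ^ 4 + σ ^ 2)^[n] = fun x => σ ^ (4 * n) * x + σ * (σ ^ (4 * n) - 1) := by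
  induction n with
  | zero => funext x; simp
  | succ n ih =>
    funext x
    rw [iterate_succ_apply', ih]
    linear_combination (-σ ^ 3 - σ) * hσ

theorem abs_goldenConj_lt_one : |Real.goldenConj| < 1 :=
  abs_lt.2 ⟨Real.neg_one_lt_goldenConj, Real.goldenConj_neg.trans one_pos⟩

end GoldenConj

/-- with `I = [−σ²,−σ³]` and `g(x) = σ⁴x + σ⁴ + σ²`, the unique
nonempty compact `W₁ ⊆ ℝ` with `W₁ = I ∪ g(W₁)` is the closure of
`U = ⋃_{n≥0} (σ^{4n}·I + σ(σ^{4n}−1))`, and this closure equals `U ∪ {−σ}`,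
where `−σ` is the fixed point of `g`. -/
theorem stmt16
    (τ σ : ℝ) (hτ : τ = (1 + Real.sqrt 5) / 2) (hσ : σ = 1 - τ)
    (U : Set ℝ)
    (hU : U = ⋃ n : ℕ,
      (fun x => σ ^ (4 * n) * x + σ * (σ ^ (4 * n) - 1)) '' Icc (-σ ^ 2) (-σ ^ 3)) :
    (closure U).Nonempty ∧ IsCompact (closure U) ∧
    closure U =
      Icc (-σ ^ 2) (-σ ^ 3) ∪ (fun x => σ ^ 4 * x + σ ^ 4 + σ ^ 2) '' closure U ∧
    (∀ W : Set ℝ, W.Nonempty → IsCompact W →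
      W = Icc (-σ ^ 2) (-σ ^ 3) ∪ (fun x => σ ^ 4 * x + σ ^ 4 + σ ^ 2) '' W →
      W = closure U) ∧
    closure U = U ∪ {-σ} ∧
    σ ^ 4 * (-σ) + σ ^ 4 + σ ^ 2 = -σ := by
  have hψ : σ = Real.goldenConj := by rw [hσ, hτ]; exact Real.one_sub_goldenConj
  have hsq : σ ^ 2 = σ + 1 := hψ ▸ Real.goldenConj_sq
  have hcontr : |σ ^ 4| < 1 := by
    rw [abs_pow]
    exact pow_lt_one₀ (abs_nonneg σ) (hψ ▸ abs_goldenConj_lt_one) four_ne_zero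
  have hg : ContractingWith ‖σ ^ 4‖₊ fun x => σ ^ 4 * x + σ ^ 4 + σ ^ 2 := by
    simpa only [add_assoc] using contractingWith_mul_add_const hcontr (σ ^ 4 + σ ^ 2)
  have hp := isFixedPt_neg_of_sq_eq_add_one hsq
  have hI : (Icc (-σ ^ 2) (-σ ^ 3)).Nonempty :=
    nonempty_Icc.2 (by nlinarith [pow_succ σ 2, hψ ▸ Real.goldenConj_neg])
  obtain rfl :
      U = forwardOrbitSet (fun x => σ ^ 4 * x + σ ^ 4 + σ ^ 2) (Icc (-σ ^ 2) (-σ ^ 3)) := by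
    rw [hU, forwardOrbitSet]
    simp only [iterate_eq_of_sq_eq_add_one hsq]
  have hclosure := hg.closure_forwardOrbitSet hp isCompact_Icc hI
  refine ⟨⟨-σ, hclosure ▸ mem_insert _ _⟩,
    (hg.isBounded_forwardOrbitSet hp isCompact_Icc.isBounded).isCompact_closure,
    hg.closure_forwardOrbitSet_eq_union_image hp isCompact_Icc hI,
    fun W _ hW hWI => hg.eq_closure_forwardOrbitSet hp isCompact_Icc hI hW hWI,
    by rw [hclosure, union_singleton], hp⟩
end
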